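/- arXiv:1204.0323 — 9 statements merged into one kernel-verified Lean document; each statement's English description precedes it below -/
import Mathlib

section
/- The set of copulas M(m) equals the intersection of the nonnegative orthant of R^(S×S) with the translated Birkhoff polytope μ₀ − I + conv(Φ); that is, a matrix μ ∈ R^(S×S) is a probability distribution on S×S with both marginals equal to m if and only if μ has nonnegative entries and μ = μ₀ − I + J for some J in the convex hull of the S×S permutation matrices. -/
/-- `f` is a probability distribution on `S × S` whose two marginals both equal `m`. -/
def IsCopula {S : Type*} [Fintype S] (m : S → ℝ) (μ : S × S → ℝ) : Prop :=
  (∀ q, 0 ≤ μ q) ∧ (∑ q : S × S, μ q = 1) ∧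
    (∀ s, ∑ a, μ (s, a) = m s) ∧ (∀ a, ∑ s, μ (s, a) = m a)

/-- The diagonal copula `μ₀`. -/
def mu0 {S : Type*} [DecidableEq S] (m : S → ℝ) : S × S → ℝ :=
  fun q => if q.1 = q.2 then m q.1 else 0

/-- The set `Φ` of `S × S` permutation matrices. -/
def permMatrices (S : Type*) [DecidableEq S] : Set (S × S → ℝ) :=
  {P | ∃ φ : Equiv.Perm S, ∀ q : S × S, P q = if q.2 = φ q.1 then 1 else 0}

/-!
Subtracting `μ₀ - I` shifts every row and column sum by `m s - 1` and changes only diagonal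
entries, so `μ` has marginals `m` exactly when `J = μ - (μ₀ - I)` has all row and column sums `1`.
Off the diagonal `J` agrees with `μ`, and on it `J (s, s) = μ (s, s) + 1 - m s ≥ 0` because a
marginal of a probability distribution is at most `1`. By Birkhoff's theorem the doubly
stochastic matrices are exactly `conv(Φ)`.
-/

open Finset

noncomputable def curryToMatrix (S : Type*) : (S × S → ℝ) ≃ₗ[ℝ] Matrix S S ℝ :=
  (LinearEquiv.curry ℝ ℝ S S).trans (Matrix.ofLinearEquiv ℝ)

section

variable {S : Type*}

lemma IsCopula.le_one [Fintype S] {m : S → ℝ} {μ : S × S → ℝ} (h : IsCopula m μ) (s : S) :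
    m s ≤ 1 := by
  obtain ⟨hμ, hsum, hrow, -⟩ := h
  calc m s = ∑ t, μ (s, t) := (hrow s).symm
    _ ≤ ∑ s, ∑ t, μ (s, t) :=
      single_le_sum (fun s _ => sum_nonneg fun t _ => hμ (s, t)) (mem_univ s)
    _ = 1 := by rw [← Fintype.sum_prod_type, hsum]

variable [DecidableEq S]

lemma curryToMatrix_image_permMatrices :
    curryToMatrix S '' permMatrices S = {σ.permMatrix ℝ | σ : Equiv.Perm S} := by
  ext M
  constructor
  · rintro ⟨P, ⟨σ, hσ⟩, rfl⟩
    refine ⟨σ, Matrix.ext fun i j => ?_⟩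
    simp [curryToMatrix, Equiv.Perm.permMatrix, PEquiv.toMatrix_apply, hσ (i, j), eq_comm]
  · rintro ⟨σ, rfl⟩
    refine ⟨fun q => if q.2 = σ q.1 then 1 else 0, ⟨σ, fun _ => rfl⟩, Matrix.ext fun i j => ?_⟩
    simp [curryToMatrix, Equiv.Perm.permMatrix, PEquiv.toMatrix_apply, eq_comm]

variable [Fintype S]

lemma mem_convexHull_permMatrices_iff {J : S × S → ℝ} :
    J ∈ convexHull ℝ (permMatrices S) ↔
      (∀ q, 0 ≤ J q) ∧ (∀ s, ∑ t, J (s, t) = 1) ∧ ∀ t, ∑ s, J (s, t) = 1 := by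
  rw [← (curryToMatrix S).injective.mem_set_image,
    ← LinearEquiv.coe_coe, (curryToMatrix S).toLinearMap.image_convexHull, LinearEquiv.coe_coe,
    curryToMatrix_image_permMatrices, ← doublyStochastic_eq_convexHull_permMatrix, SetLike.mem_coe,
    mem_doublyStochastic_iff_sum, Prod.forall]
  rfl

lemma sum_mu0_left (m : S → ℝ) (s : S) : ∑ t, mu0 m (s, t) = m s := by
  simp [mu0]

lemma sum_mu0_right (m : S → ℝ) (t : S) : ∑ s, mu0 m (s, t) = m t := by
  simp [mu0]

lemma sum_sub_mu0_sub_one_left (m : S → ℝ) (μ : S × S → ℝ) (s : S) :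
    ∑ t, (μ - (mu0 m - mu0 1) : S × S → ℝ) (s, t) = ∑ t, μ (s, t) - (m s - 1) := by
  simp only [Pi.sub_apply, sum_sub_distrib, sum_mu0_left, Pi.one_apply]

lemma sum_sub_mu0_sub_one_right (m : S → ℝ) (μ : S × S → ℝ) (t : S) :
    ∑ s, (μ - (mu0 m - mu0 1) : S × S → ℝ) (s, t) = ∑ s, μ (s, t) - (m t - 1) := by
  simp only [Pi.sub_apply, sum_sub_distrib, sum_mu0_right, Pi.one_apply]

lemma isCopula_iff_sub_mem_convexHull {m : S → ℝ} (hm1 : ∑ s, m s = 1) {μ : S × S → ℝ}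
    (hμ : ∀ q, 0 ≤ μ q) :
    IsCopula m μ ↔ μ - (mu0 m - mu0 1) ∈ convexHull ℝ (permMatrices S) := by
  have shift (x y : ℝ) : x - (y - 1) = 1 ↔ x = y := by constructor <;> intro h <;> linarith
  simp only [mem_convexHull_permMatrices_iff, sum_sub_mu0_sub_one_left,
    sum_sub_mu0_sub_one_right, shift]
  constructor
  · intro hc
    refine ⟨fun ⟨s, t⟩ => ?_, hc.2.2.1, hc.2.2.2⟩
    by_cases hst : s = t
    · subst hst
      have := hc.le_one s
      have := hμ (s, s)
      simp only [Pi.sub_apply, mu0, if_true, Pi.one_apply]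
      linarith
    · simpa [mu0, hst] using hμ (s, t)
  · rintro ⟨-, hrow, hcol⟩
    refine ⟨hμ, ?_, hrow, hcol⟩
    rw [Fintype.sum_prod_type]
    simp only [hrow, hm1]

end

theorem stmt0_general {S : Type*} [Fintype S] [DecidableEq S]
    (m : S → ℝ) (hm1 : ∑ s, m s = 1)
    (μ : S × S → ℝ) :
    IsCopula m μ ↔
      ((∀ q, 0 ≤ μ q) ∧
        ∃ J ∈ convexHull ℝ (permMatrices S),
          μ = mu0 m - (fun q : S × S => if q.1 = q.2 then (1 : ℝ) else 0) + J) := by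
  -- the identity matrix `I` is `mu0 1`
  change _ ↔ _ ∧ ∃ J ∈ _, μ = mu0 m - mu0 1 + J
  have translate : (∃ J ∈ convexHull ℝ (permMatrices S), μ = mu0 m - mu0 1 + J) ↔
      μ - (mu0 m - mu0 1) ∈ convexHull ℝ (permMatrices S) :=
    ⟨by rintro ⟨J, hJ, rfl⟩; simpa using hJ, fun h => ⟨_, h, (add_sub_cancel _ _).symm⟩⟩
  rw [translate]
  exact ⟨fun h => ⟨h.1, (isCopula_iff_sub_mem_convexHull hm1 h.1).1 h⟩,
    fun ⟨hμ, hJ⟩ => (isCopula_iff_sub_mem_convexHull hm1 hμ).2 hJ⟩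

theorem stmt0 {S : Type*} [Fintype S] [DecidableEq S] [Nonempty S]
    (m : S → ℝ) (hm : ∀ s, 0 ≤ m s) (hm1 : ∑ s, m s = 1)
    (μ : S × S → ℝ) :
    IsCopula m μ ↔
      ((∀ q, 0 ≤ μ q) ∧
        ∃ J ∈ convexHull ℝ (permMatrices S),
          μ = mu0 m - (fun q : S × S => if q.1 = q.2 then (1 : ℝ) else 0) + J) :=
  stmt0_general m hm1 μ
end

section
/- For a stationary strategy y, the following are equivalent: (D1) U¹(μ₀,y) > U¹(μ,y) for every copula μ ∈ M(m) with μ ≠ μ₀; (D'1) for every permutation φ of S that is not the identity, Σ_{s∈S} u¹(s, y(·|s)) > Σ_{s∈S} u¹(s, y(·|φ(s))), where u¹(s, y(·|a)) = Σ_{b∈B} y(b|a) u¹(s,b). -/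
open Finset

section aux
variable {S : Type*} [Fintype S] [DecidableEq S]

/-- Cycle extraction. -/
lemma exists_perm_of_flow (N : S → S → ℝ) (h0 : ∀ s a, 0 ≤ N s a)
    (hdiag : ∀ s, N s s = 0) (hbal : ∀ s, ∑ a, N s a = ∑ a, N a s)
    (hne : ∃ s a, N s a ≠ 0) :
    ∃ φ : Equiv.Perm S, φ ≠ 1 ∧ ∀ s, φ s ≠ s → 0 < N s (φ s) := by
  classical
  set P : S → Prop := fun s => ∃ a, 0 < N s a with hP
  have hout : ∀ s a, 0 < N s a → P a := by
    intro s a ha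
    have hin : 0 < ∑ a', N a' a := by
      have : N s a ≤ ∑ a', N a' a :=
        Finset.single_le_sum (fun i _ => h0 i a) (mem_univ s)
      linarith
    rw [← hbal] at hin
    by_contra hc
    simp only [hP, not_exists] at hc
    have : ∑ a', N a a' = 0 := by
      apply Finset.sum_eq_zero
      intro x _
      have := h0 a x
      have := hc x
      push_neg at this
      linarith
    linarith
  have hsucc : ∀ s : {s // P s}, ∃ a : {s // P s}, 0 < N s.1 a.1 := by
    rintro ⟨s, a, ha⟩
    exact ⟨⟨a, hout s a ha⟩, ha⟩
  obtain ⟨s1, a1, hna⟩ := hne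
  have hna' : 0 < N s1 a1 := lt_of_le_of_ne (h0 s1 a1) (Ne.symm hna)
  set s0 : {s // P s} := ⟨s1, ⟨a1, hna'⟩⟩ with hs0
  set succ : {s // P s} → {s // P s} := fun s => (hsucc s).choose with hsuccdef
  have hedge : ∀ s : {s // P s}, 0 < N s.1 (succ s).1 := fun s => (hsucc s).choose_spec
  set g : ℕ → S := fun n => (succ^[n] s0).1 with hg
  have hgedge : ∀ n, 0 < N (g n) (g (n + 1)) := by
    intro n
    simp only [hg, Function.iterate_succ_apply']
    exact hedge _
  have hrep : ∃ j, ∃ i, i < j ∧ g i = g j := by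
    obtain ⟨x, y, hxy, hg⟩ := Finite.exists_ne_map_eq_of_infinite g
    rcases lt_or_gt_of_ne hxy with h | h
    · exact ⟨y, x, h, hg⟩
    · exact ⟨x, y, h, hg.symm⟩
  set j0 := Nat.find hrep with hj0
  obtain ⟨i0, hi0, hgij⟩ := Nat.find_spec hrep
  rw [← hj0] at hi0 hgij
  have hinj : ∀ a b, a < b → b < j0 → g a ≠ g b := by
    intro a b hab hbj hgab
    exact Nat.find_min hrep hbj ⟨a, hab, hgab⟩
  set len := j0 - i0 with hlendef
  have hlen1 : 1 ≤ len := by omega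
  have hlen2 : 2 ≤ len := by
    rcases Nat.lt_or_ge len 2 with h | h
    · exfalso
      have : j0 = i0 + 1 := by omega
      have h1 := hgedge i0
      rw [this] at hgij
      rw [← hgij] at h1
      have := hdiag (g i0)
      linarith
    · exact h
  set l : List S := (List.range len).map (fun k => g (i0 + k)) with hl
  have hllen : l.length = len := by simp [hl]
  have hget : ∀ (k : ℕ) (hk : k < l.length), l[k] = g (i0 + k) := by
    intro k hk
    simp [hl]
  have hnd : l.Nodup := by
    rw [hl]
    apply List.Nodup.map_on
    · intro x hx y hy hxy
      simp only [List.mem_range] at hx hy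
      by_contra hne2
      rcases lt_or_gt_of_ne hne2 with h | h
      · exact hinj (i0 + x) (i0 + y) (by omega) (by omega) hxy
      · exact hinj (i0 + y) (i0 + x) (by omega) (by omega) hxy.symm
    · exact List.nodup_range
  set φ := l.formPerm with hφ
  have hkey : ∀ (k : ℕ) (hk : k < l.length), φ l[k] = g (i0 + k + 1) := by
    intro k hk
    rw [hφ, List.formPerm_apply_getElem l hnd k hk]
    rcases Nat.lt_or_ge (k + 1) len with h | h
    · have : (k + 1) % l.length = k + 1 := by rw [hllen]; exact Nat.mod_eq_of_lt h
      simp only [this]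
      rw [hget (k+1) (by omega)]
      ring_nf
    · have hk' : k + 1 = len := by rw [hllen] at hk; omega
      have : (k + 1) % l.length = 0 := by rw [hllen, hk']; simp
      simp only [this]
      rw [hget 0 (by rw [hllen]; omega)]
      have : i0 + k + 1 = j0 := by omega
      rw [this, Nat.add_zero, hgij]
  refine ⟨φ, ?_, ?_⟩
  · intro hone
    have h0l : (0 : ℕ) < l.length := by omega
    have h1l : (1 : ℕ) < l.length := by omega
    have := hkey 0 h0l
    rw [hone] at this
    simp only [Equiv.Perm.coe_one, id_eq] at this
    rw [hget 0 h0l] at this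
    exact hinj i0 (i0 + 0 + 1) (by omega) (by omega) (by simpa using this)
  · intro s hs
    have hmem : s ∈ l := by
      by_contra hmem
      exact hs (List.formPerm_apply_of_notMem hmem)
    obtain ⟨k, hk, hks⟩ := List.getElem_of_mem hmem
    rw [← hks, hkey k hk, hget k hk]
    exact hgedge (i0 + k)


lemma flow_step (d : S → S → ℝ) (hd0 : ∀ s, d s s = 0)
    (hd : ∀ φ : Equiv.Perm S, φ ≠ 1 → 0 < ∑ s, d s (φ s))
    (N : S → S → ℝ) (h0 : ∀ s a, 0 ≤ N s a) (hdiag : ∀ s, N s s = 0)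
    (hbal : ∀ s, ∑ a, N s a = ∑ a, N a s) (hne : ∃ s a, N s a ≠ 0) :
    ∃ N' : S → S → ℝ, (∀ s a, 0 ≤ N' s a) ∧ (∀ s, N' s s = 0) ∧
      (∀ s, ∑ a, N' s a = ∑ a, N' a s) ∧
      (univ.filter fun p : S × S => N' p.1 p.2 ≠ 0).card <
        (univ.filter fun p : S × S => N p.1 p.2 ≠ 0).card ∧
      ∃ c : ℝ, 0 < c ∧
        ∑ s, ∑ a, N s a * d s a = (∑ s, ∑ a, N' s a * d s a) + c := by
  classical
  obtain ⟨φ, hφ1, hφN⟩ := exists_perm_of_flow N h0 hdiag hbal hne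
  set F : Finset S := univ.filter (fun s => φ s ≠ s) with hF
  have hFne : F.Nonempty := by
    by_contra hc
    apply hφ1
    ext s
    simp only [Finset.not_nonempty_iff_eq_empty, Finset.eq_empty_iff_forall_notMem] at hc
    have := hc s
    simp only [hF, mem_filter, mem_univ, true_and, not_not] at this
    simpa using this
  set ε : ℝ := F.inf' hFne (fun s => N s (φ s)) with hε
  have hεpos : 0 < ε := by
    rw [hε, Finset.lt_inf'_iff]
    intro s hsF
    exact hφN s (by simpa [hF] using hsF)
  have hεle : ∀ s, φ s ≠ s → ε ≤ N s (φ s) := by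
    intro s hs
    exact Finset.inf'_le _ (by simp [hF, hs])
  set N' : S → S → ℝ := fun s a => N s a - (if φ s ≠ s ∧ a = φ s then ε else 0) with hN'
  have h0' : ∀ s a, 0 ≤ N' s a := by
    intro s a
    simp only [hN']
    split_ifs with h
    · rcases h with ⟨h1, h2⟩
      subst h2
      have := hεle s h1
      linarith
    · simp [h0 s a]
  have hdiag' : ∀ s, N' s s = 0 := by
    intro s
    simp only [hN']
    have : ¬ (φ s ≠ s ∧ s = φ s) := by
      rintro ⟨h1, h2⟩; exact h1 h2.symm
    simp [this, hdiag s]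
  have hrow : ∀ s, ∑ a, (if φ s ≠ s ∧ a = φ s then ε else (0:ℝ)) =
      (if φ s ≠ s then ε else 0) := by
    intro s
    by_cases h : φ s ≠ s
    · rw [if_pos h]
      rw [Finset.sum_congr rfl (fun a _ => by
        rw [show (if φ s ≠ s ∧ a = φ s then ε else (0:ℝ)) = (if a = φ s then ε else 0) from by
          by_cases ha : a = φ s
          · rw [if_pos ⟨h, ha⟩, if_pos ha]
          · rw [if_neg (fun hc => ha hc.2), if_neg ha]])]
      rw [Finset.sum_ite_eq' univ (φ s) (fun _ => ε)]
      simp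
    · push_neg at h
      rw [if_neg (by simp [h])]
      apply Finset.sum_eq_zero
      intro a _
      rw [if_neg (by simp [h])]
  have hcol : ∀ s, ∑ a, (if φ a ≠ a ∧ s = φ a then ε else (0:ℝ)) =
      (if φ s ≠ s then ε else 0) := by
    intro s
    rw [← Equiv.sum_comp φ.symm (fun a => if φ a ≠ a ∧ s = φ a then ε else (0:ℝ))]
    have hterm : ∀ b : S, (if φ (φ.symm b) ≠ φ.symm b ∧ s = φ (φ.symm b) then ε else (0:ℝ))
        = if s = b then (if φ s ≠ s then ε else 0) else 0 := by
      intro b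
      rw [show φ (φ.symm b) = b from φ.apply_symm_apply b]
      by_cases hb : s = b
      · subst hb
        by_cases h : φ s = s
        · have h2 : φ.symm s = s := φ.symm_apply_eq.mpr h.symm
          simp [h, h2]
        · have h2 : φ.symm s ≠ s := fun hc => h (φ.symm_apply_eq.mp hc).symm
          simp [h, Ne.symm h2]
      · simp [hb]
    rw [Finset.sum_congr rfl (fun b _ => hterm b)]
    rw [Finset.sum_ite_eq univ s (fun _ => if φ s ≠ s then ε else (0:ℝ))]
    simp
  have hbal' : ∀ s, ∑ a, N' s a = ∑ a, N' a s := by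
    intro s
    simp only [hN', Finset.sum_sub_distrib]
    rw [hrow s, hcol s, hbal s]
  have hsub : (univ.filter fun p : S × S => N' p.1 p.2 ≠ 0) ⊆
      (univ.filter fun p : S × S => N p.1 p.2 ≠ 0) := by
    intro p hp
    simp only [mem_filter, mem_univ, true_and] at hp ⊢
    intro hNp
    apply hp
    simp only [hN', hNp, zero_sub]
    split_ifs with h
    · exfalso
      rcases h with ⟨h1, h2⟩
      have := hφN p.1 h1
      rw [← h2] at this
      linarith
    · simp
  obtain ⟨smin, hsmin, hsmineq⟩ := Finset.exists_mem_eq_inf' hFne (fun s => N s (φ s))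
  have hsminF : φ smin ≠ smin := by simpa [hF] using hsmin
  have hcard : (univ.filter fun p : S × S => N' p.1 p.2 ≠ 0).card <
      (univ.filter fun p : S × S => N p.1 p.2 ≠ 0).card := by
    apply Finset.card_lt_card
    rw [Finset.ssubset_iff_of_subset hsub]
    refine ⟨(smin, φ smin), ?_, ?_⟩
    · simp only [mem_filter, mem_univ, true_and]
      exact ne_of_gt (hφN smin hsminF)
    · simp only [mem_filter, mem_univ, true_and, not_not, hN']
      split_ifs with h
      · rw [hε]
        exact sub_eq_zero_of_eq hsmineq.symm
      · exact absurd ⟨hsminF, trivial⟩ h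
  refine ⟨N', h0', hdiag', hbal', hcard, ε * ∑ s, d s (φ s), mul_pos hεpos (hd φ hφ1), ?_⟩
  have key : ∀ s, ∑ a, (if φ s ≠ s ∧ a = φ s then ε else (0:ℝ)) * d s a
      = ε * d s (φ s) := by
    intro s
    by_cases h : φ s ≠ s
    · rw [Finset.sum_congr rfl (fun a _ => by
        rw [show (if φ s ≠ s ∧ a = φ s then ε else (0:ℝ)) * d s a
            = (if a = φ s then ε * d s a else 0) from by
          by_cases ha : a = φ s
          · rw [if_pos ⟨h, ha⟩, if_pos ha]
          · rw [if_neg (fun hc => ha hc.2), if_neg ha, zero_mul]])]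
      rw [Finset.sum_ite_eq' univ (φ s) (fun a => ε * d s a)]
      simp
    · push_neg at h
      have : ∀ a, (if φ s ≠ s ∧ a = φ s then ε else (0:ℝ)) * d s a = 0 := by
        intro a
        rw [if_neg (by simp [h]), zero_mul]
      rw [Finset.sum_congr rfl (fun a _ => this a), Finset.sum_const_zero, h, hd0 s, mul_zero]
  have : ∑ s, ∑ a, N' s a * d s a
      = ∑ s, ∑ a, N s a * d s a - ε * ∑ s, d s (φ s) := by
    simp only [hN', sub_mul, Finset.sum_sub_distrib]
    rw [Finset.mul_sum]
    congr 1
    exact Finset.sum_congr rfl (fun s _ => key s)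
  rw [this]; ring

lemma flow_nonneg (d : S → S → ℝ) (hd0 : ∀ s, d s s = 0)
    (hd : ∀ φ : Equiv.Perm S, φ ≠ 1 → 0 < ∑ s, d s (φ s)) :
    ∀ n (N : S → S → ℝ), (univ.filter fun p : S × S => N p.1 p.2 ≠ 0).card = n →
    (∀ s a, 0 ≤ N s a) → (∀ s, N s s = 0) → (∀ s, ∑ a, N s a = ∑ a, N a s) →
    0 ≤ ∑ s, ∑ a, N s a * d s a := by
  intro n
  induction n using Nat.strong_induction_on with
  | _ n ih =>
    intro N hcard h0 hdiag hbal
    by_cases hne : ∃ s a, N s a ≠ 0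
    · obtain ⟨N', h0', hdiag', hbal', hlt, c, hc, heq⟩ :=
        flow_step d hd0 hd N h0 hdiag hbal hne
      rw [heq]
      have := ih _ (hcard ▸ hlt) N' rfl h0' hdiag' hbal'
      linarith
    · push_neg at hne
      simp [hne]

lemma flow_pos (d : S → S → ℝ) (hd0 : ∀ s, d s s = 0)
    (hd : ∀ φ : Equiv.Perm S, φ ≠ 1 → 0 < ∑ s, d s (φ s))
    (N : S → S → ℝ) (h0 : ∀ s a, 0 ≤ N s a) (hdiag : ∀ s, N s s = 0)
    (hbal : ∀ s, ∑ a, N s a = ∑ a, N a s) (hne : ∃ s a, N s a ≠ 0) :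
    0 < ∑ s, ∑ a, N s a * d s a := by
  obtain ⟨N', h0', hdiag', hbal', hlt, c, hc, heq⟩ :=
    flow_step d hd0 hd N h0 hdiag hbal hne
  rw [heq]
  have := flow_nonneg d hd0 hd _ N' rfl h0' hdiag' hbal'
  linarith

end aux


/-- `y` is a stationary strategy: each `y a` is a probability distribution on `B`. -/
def IsStrategy {S B : Type*} [Fintype B] (y : S → B → ℝ) : Prop :=
  (∀ a b, 0 ≤ y a b) ∧ ∀ a, ∑ b, y a b = 1

/-- `U(μ, y) = Σ_{(s,a)} μ(s,a) Σ_b y(b|a) u(s,b)`. -/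
def Upay {S B : Type*} [Fintype S] [Fintype B]
    (u : S × B → ℝ) (μ : S × S → ℝ) (y : S → B → ℝ) : ℝ :=
  ∑ s, ∑ a, μ (s, a) * ∑ b, y a b * u (s, b)

theorem stmt2 {S B : Type*} [Fintype S] [DecidableEq S] [Nonempty S]
    [Fintype B] [Nonempty B]
    (m : S → ℝ) (hm : ∀ s, 0 < m s) (hm1 : ∑ s, m s = 1)
    (u1 : S × B → ℝ) (y : S → B → ℝ) (hy : IsStrategy y) :
    (∀ μ : S × S → ℝ, IsCopula m μ → μ ≠ mu0 m → Upay u1 (mu0 m) y > Upay u1 μ y) ↔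
      (∀ φ : Equiv.Perm S, φ ≠ 1 →
        ∑ s, ∑ b, y s b * u1 (s, b) > ∑ s, ∑ b, y (φ s) b * u1 (s, b)) := by
  classical
  set c : S → S → ℝ := fun s a => ∑ b, y a b * u1 (s, b) with hc
  have hU0 : Upay u1 (mu0 m) y = ∑ s, m s * c s s := by
    unfold Upay
    apply Finset.sum_congr rfl
    intro s _
    have : ∀ a, mu0 m (s, a) * c s a = if s = a then m s * c s a else 0 := by
      intro a
      simp only [mu0]
      split_ifs <;> ring
    rw [Finset.sum_congr rfl (fun a _ => this a),
      Finset.sum_ite_eq univ s (fun a => m s * c s a)]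
    simp
  constructor
  · -- D1 → D'1
    intro h φ hφ
    set ε : ℝ := univ.inf' univ_nonempty m with hεdef
    have hεpos : 0 < ε := by
      rw [hεdef, Finset.lt_inf'_iff]
      intro s _
      exact hm s
    have hεle : ∀ s, ε ≤ m s := fun s => Finset.inf'_le _ (mem_univ s)
    set μ : S × S → ℝ := fun q =>
      mu0 m q + ε * ((if q.2 = φ q.1 then 1 else 0) - (if q.2 = q.1 then 1 else 0))
      with hμdef
    have hcop : IsCopula m μ := by
      have hrow : ∀ s, ∑ a, μ (s, a) = m s := by
        intro s
        simp only [hμdef]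
        rw [Finset.sum_add_distrib, ← Finset.mul_sum, Finset.sum_sub_distrib]
        have e0 : ∑ a, mu0 m (s, a) = m s := by
          simp only [mu0]
          rw [Finset.sum_ite_eq univ s (fun _ => m s)]
          simp
        have e1 : ∑ a, (if a = φ s then (1:ℝ) else 0) = 1 := by
          rw [Finset.sum_ite_eq' univ (φ s) (fun _ => (1:ℝ))]; simp
        have e2 : ∑ a, (if a = s then (1:ℝ) else 0) = 1 := by
          rw [Finset.sum_ite_eq' univ s (fun _ => (1:ℝ))]; simp
        rw [e0, e1, e2]
        ring
      have hcol : ∀ a, ∑ s, μ (s, a) = m a := by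
        intro a
        simp only [hμdef]
        rw [Finset.sum_add_distrib, ← Finset.mul_sum, Finset.sum_sub_distrib]
        have e0 : ∑ s, mu0 m (s, a) = m a := by
          simp only [mu0]
          rw [Finset.sum_ite_eq' univ a (fun s => m s)]
          simp
        have e1 : ∑ s, (if a = φ s then (1:ℝ) else 0) = 1 := by
          have : ∀ s, (if a = φ s then (1:ℝ) else 0) = if φ.symm a = s then 1 else 0 := by
            intro s
            congr 1
            simp [Equiv.symm_apply_eq]
          rw [Finset.sum_congr rfl (fun s _ => this s),
            Finset.sum_ite_eq univ (φ.symm a) (fun _ => (1:ℝ))]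
          simp
        have e2 : ∑ s, (if a = s then (1:ℝ) else 0) = 1 := by
          rw [Finset.sum_ite_eq univ a (fun _ => (1:ℝ))]; simp
        rw [e0, e1, e2]
        ring
      refine ⟨?_, ?_, hrow, hcol⟩
      · rintro ⟨s, a⟩
        simp only [hμdef, mu0]
        by_cases h1 : a = s <;> by_cases h2 : a = φ s <;>
          simp [h1, h2, Ne.symm] <;>
          [skip; skip; skip] <;> try positivity
        all_goals first
          | (have := hm s; have := hεle s; split_ifs <;> linarith)
          | (have := hεpos; split_ifs <;> linarith)
      · rw [Fintype.sum_prod_type]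
        rw [Finset.sum_congr rfl (fun s _ => hrow s)]
        exact hm1
    have hneq : μ ≠ mu0 m := by
      obtain ⟨s, hs⟩ : ∃ s, φ s ≠ s := by
        by_contra hc2
        push_neg at hc2
        exact hφ (Equiv.ext fun s => by simp [hc2 s])
      intro heq
      have := congrFun heq (s, φ s)
      simp only [hμdef, mu0] at this
      rw [if_neg (fun hc : s = φ s => hs hc.symm), if_pos trivial,
        if_neg (fun hc : φ s = s => hs hc)] at this
      simp at this
      linarith
    have hUμ : Upay u1 μ y
        = (∑ s, m s * c s s) + ε * ((∑ s, c s (φ s)) - ∑ s, c s s) := by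
      unfold Upay
      have expand : ∀ s a, μ (s, a) * c s a
          = mu0 m (s, a) * c s a
            + ε * ((if a = φ s then c s a else 0) - (if a = s then c s a else 0)) := by
        intro s a
        simp only [hμdef]
        split_ifs <;> ring
      rw [Finset.sum_congr rfl (fun s _ =>
        Finset.sum_congr rfl (fun a _ => expand s a))]
      simp only [Finset.sum_add_distrib, Finset.sum_sub_distrib, ← Finset.mul_sum]
      have e1 : ∀ s, ∑ a, (if a = φ s then c s a else 0) = c s (φ s) := by
        intro s
        rw [Finset.sum_ite_eq' univ (φ s) (fun a => c s a)]; simp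
      have e2 : ∀ s, ∑ a, (if a = s then c s a else 0) = c s s := by
        intro s
        rw [Finset.sum_ite_eq' univ s (fun a => c s a)]; simp
      rw [Finset.sum_congr rfl (fun s _ => e1 s), Finset.sum_congr rfl (fun s _ => e2 s)]
      rw [← hU0]
      unfold Upay
      ring
    have hgt := h μ hcop hneq
    rw [hU0, hUμ] at hgt
    show (∑ s, c s s) > ∑ s, c s (φ s)
    nlinarith
  · -- D'1 → D1
    intro h μ hcop hneq
    obtain ⟨hpos, htot, hrowμ, hcolμ⟩ := hcop
    set d : S → S → ℝ := fun s a => c s s - c s a with hd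
    set N : S → S → ℝ := fun s a => if s = a then 0 else μ (s, a) with hN
    have hd0 : ∀ s, d s s = 0 := fun s => sub_self _
    have hdpos : ∀ φ : Equiv.Perm S, φ ≠ 1 → 0 < ∑ s, d s (φ s) := by
      intro φ hφ
      have := h φ hφ
      simp only [hd, Finset.sum_sub_distrib]
      show (0:ℝ) < (∑ s, c s s) - ∑ s, c s (φ s)
      have h2 : (∑ s, c s s) > ∑ s, c s (φ s) := this
      linarith
    have h0 : ∀ s a, 0 ≤ N s a := by
      intro s a
      simp only [hN]
      split_ifs
      · exact le_refl 0
      · exact hpos (s, a)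
    have hdiag : ∀ s, N s s = 0 := by intro s; simp [hN]
    have hNba : ∀ s a, N s a = μ (s, a) - (if s = a then μ (s, a) else 0) := by
      intro s a
      simp only [hN]
      split_ifs <;> ring
    have hbal : ∀ s, ∑ a, N s a = ∑ a, N a s := by
      intro s
      have e1 : ∑ a, N s a = m s - μ (s, s) := by
        rw [Finset.sum_congr rfl (fun a _ => hNba s a), Finset.sum_sub_distrib,
          hrowμ s, Finset.sum_ite_eq univ s (fun a => μ (s, a))]
        simp
      have e2 : ∑ a, N a s = m s - μ (s, s) := by
        have : ∀ a, N a s = μ (a, s) - (if a = s then μ (a, s) else 0) := fun a => hNba a s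
        rw [Finset.sum_congr rfl (fun a _ => this a), Finset.sum_sub_distrib,
          hcolμ s, Finset.sum_ite_eq' univ s (fun a => μ (a, s))]
        simp
      rw [e1, e2]
    have hne' : ∃ s a, N s a ≠ 0 := by
      by_contra hc2
      push_neg at hc2
      apply hneq
      funext q
      obtain ⟨s, a⟩ := q
      simp only [mu0]
      by_cases hh : s = a
      · subst hh
        simp only [if_pos rfl]
        have : ∑ a, μ (s, a) = μ (s, s) := by
          apply Finset.sum_eq_single_of_mem s (mem_univ s)
          intro b _ hb
          have := hc2 s b
          simp only [hN] at this
          rwa [if_neg (fun hc : s = b => hb hc.symm)] at this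
        rw [← hrowμ s, this]
        simp
      · rw [if_neg hh]
        have := hc2 s a
        simp only [hN] at this
        rwa [if_neg hh] at this
    have hkey := flow_pos d hd0 hdpos N h0 hdiag hbal hne'
    have hident : ∑ s, ∑ a, N s a * d s a = Upay u1 (mu0 m) y - Upay u1 μ y := by
      have e1 : ∀ s a, N s a * d s a = μ (s, a) * c s s - μ (s, a) * c s a := by
        intro s a
        simp only [hN, hd]
        split_ifs with hh
        · subst hh; ring
        · ring
      rw [Finset.sum_congr rfl (fun s _ =>
        Finset.sum_congr rfl (fun a _ => e1 s a))]
      simp only [Finset.sum_sub_distrib]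
      have e2 : ∀ s, ∑ a, μ (s, a) * c s s = m s * c s s := by
        intro s
        rw [← Finset.sum_mul, hrowμ s]
      rw [Finset.sum_congr rfl (fun s _ => e2 s), hU0]
      rfl
    rw [hident] at hkey
    linarith
end

section
/- Let y₀ be a stationary strategy satisfying U¹(μ₀,y₀) > U¹(μ,y₀) for every μ ∈ M(m) with μ ≠ μ₀, let ȳ be a stationary strategy satisfying U¹(μ₀,ȳ) ≥ U¹(μ,ȳ) for every μ ∈ M(m), let ε ∈ (0,1], and set y = ε·y₀ + (1−ε)·ȳ (pointwise convex combination of distributions). Define c₁ = min over extreme points μ_e of M(m) with μ_e ≠ μ₀ of (U¹(μ₀,y₀) − U¹(μ_e,y₀)), and c₂ = max over extreme points μ_e of M(m) with μ_e ≠ μ₀ of ‖μ_e − μ₀‖₁. Then c₁ > 0, c₂ > 0, and for every μ ∈ M(m): U¹(μ₀,y) − U¹(μ,y) ≥ (ε·c₁/c₂)·‖μ − μ₀‖₁. -/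
/-- The ℓ¹-distance between two points of `ℝ^(S×S)`. -/
def l1dist {S : Type*} [Fintype S] (μ ν : S × S → ℝ) : ℝ :=
  ∑ q : S × S, |μ q - ν q|

open Set

theorem ConvexOn.le_of_forall_extremePoints_le {E : Type*} [AddCommGroup E] [Module ℝ E]
    [TopologicalSpace E] [T2Space E] [IsTopologicalAddGroup E] [ContinuousSMul ℝ E]
    [LocallyConvexSpace ℝ E] {K : Set E} {f : E → ℝ} {r : ℝ} (hK : IsCompact K)
    (hf : ConvexOn ℝ K f) (hfc : ContinuousOn f K) (h : ∀ x ∈ K.extremePoints ℝ, f x ≤ r) :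
    ∀ x ∈ K, f x ≤ r := by
  have hclosed : IsClosed {x ∈ K | f x ≤ r} :=
    hfc.preimage_isClosed_of_isClosed hK.isClosed isClosed_Iic
  have hsub : closure (convexHull ℝ (K.extremePoints ℝ)) ⊆ {x ∈ K | f x ≤ r} :=
    closure_minimal (convexHull_min (fun x hx => ⟨extremePoints_subset hx, h x hx⟩)
      (hf.convex_le r)) hclosed
  rw [closure_convexHull_extremePoints hK hf.1] at hsub
  exact fun x hx => (hsub hx).2

section Copula

variable {S : Type*} [Fintype S]

theorem isClosed_setOf_isCopula (m : S → ℝ) : IsClosed {μ : S × S → ℝ | IsCopula m μ} := by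
  simp only [IsCopula, ofPred_and, ofPred_forall]
  refine .inter (isClosed_iInter fun q => ?_)
    (.inter ?_ (.inter (isClosed_iInter fun s => ?_) (isClosed_iInter fun a => ?_)))
  · exact isClosed_le continuous_const (continuous_apply q)
  all_goals exact isClosed_eq (by fun_prop) continuous_const

theorem isCompact_setOf_isCopula (m : S → ℝ) : IsCompact {μ : S × S → ℝ | IsCopula m μ} := by
  refine (isCompact_Icc (a := 0) (b := 1)).of_isClosed_subset (isClosed_setOf_isCopula m)
    fun μ ⟨hμ0, hμ1, _, _⟩ => ⟨hμ0, fun q => ?_⟩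
  calc μ q ≤ ∑ p, μ p := Finset.single_le_sum (fun p _ => hμ0 p) (Finset.mem_univ q)
    _ = 1 := hμ1

theorem convex_setOf_isCopula (m : S → ℝ) : Convex ℝ {μ : S × S → ℝ | IsCopula m μ} := by
  intro μ ⟨hμ0, hμ1, hμr, hμc⟩ ν ⟨hν0, hν1, hνr, hνc⟩ a b ha hb hab
  simp only [mem_ofPred_eq, IsCopula, Pi.add_apply, Pi.smul_apply, smul_eq_mul,
    Finset.sum_add_distrib, ← Finset.mul_sum, hμ1, hν1, hμr, hνr, hμc, hνc]
  refine ⟨fun q => by have := hμ0 q; have := hν0 q; positivity, by linarith,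
    fun s => by linear_combination m s * hab, fun s => by linear_combination m s * hab⟩

end Copula

section L1

variable {S : Type*} [Fintype S]

theorem l1dist_self (μ : S × S → ℝ) : l1dist μ μ = 0 := by
  simp [l1dist]

theorem l1dist_pos_of_ne {μ ν : S × S → ℝ} (h : μ ≠ ν) : 0 < l1dist μ ν := by
  obtain ⟨q, hq⟩ := Function.ne_iff.mp h
  exact Finset.sum_pos' (fun p _ => abs_nonneg _)
    ⟨q, Finset.mem_univ q, abs_pos.2 (sub_ne_zero.2 hq)⟩

theorem continuous_l1dist_left (ν : S × S → ℝ) : Continuous fun μ => l1dist μ ν := by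
  unfold l1dist
  fun_prop

theorem convexOn_l1dist_left (ν : S × S → ℝ) :
    ConvexOn ℝ univ fun μ => l1dist μ ν := by
  refine ⟨convex_univ, fun μ _ μ' _ a b ha hb hab => ?_⟩
  simp only [l1dist, smul_eq_mul, Finset.mul_sum, ← Finset.sum_add_distrib]
  refine Finset.sum_le_sum fun q _ => ?_
  have hsplit : (a • μ + b • μ') q - ν q = a * (μ q - ν q) + b * (μ' q - ν q) := by
    simp only [Pi.add_apply, Pi.smul_apply, smul_eq_mul]
    linear_combination ν q * hab
  calc |(a • μ + b • μ') q - ν q| ≤ |a * (μ q - ν q)| + |b * (μ' q - ν q)| :=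
        hsplit ▸ abs_add_le _ _
    _ = a * |μ q - ν q| + b * |μ' q - ν q| := by
        rw [abs_mul, abs_mul, abs_of_nonneg ha, abs_of_nonneg hb]

end L1

section Payoff

variable {S B : Type*} [Fintype S] [Fintype B]

def upayLinearMap (u : S × B → ℝ) (y : S → B → ℝ) : (S × S → ℝ) →ₗ[ℝ] ℝ where
  toFun μ := Upay u μ y
  map_add' μ ν := by
    simp only [Upay, Pi.add_apply, add_mul, Finset.sum_add_distrib]
  map_smul' c μ := by
    simp only [Upay, Pi.smul_apply, smul_eq_mul, RingHom.id_apply, Finset.mul_sum, mul_assoc]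

theorem upay_of_forall_eq_mix (u : S × B → ℝ) (μ : S × S → ℝ) {ε : ℝ} {y₀ y₁ y : S → B → ℝ}
    (hy : ∀ a b, y a b = ε * y₀ a b + (1 - ε) * y₁ a b) :
    Upay u μ y = ε * Upay u μ y₀ + (1 - ε) * Upay u μ y₁ := by
  simp only [Upay, hy, Finset.mul_sum, ← Finset.sum_add_distrib]
  exact Finset.sum_congr rfl fun s _ => Finset.sum_congr rfl fun a _ =>
    Finset.sum_congr rfl fun b _ => by ring

theorem mul_l1dist_le_upay_sub_of_mix (u : S × B → ℝ) {μ ν : S × S → ℝ}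
    {ε c₁ c₂ : ℝ} {y₀ y₁ y : S → B → ℝ} (hy : ∀ a b, y a b = ε * y₀ a b + (1 - ε) * y₁ a b)
    (hε0 : 0 ≤ ε) (hε1 : ε ≤ 1) (hc₁ : 0 ≤ c₁) (hc₂ : 0 < c₂)
    (hgap₀ : c₁ ≤ Upay u μ y₀ - Upay u ν y₀) (hgap₁ : Upay u ν y₁ ≤ Upay u μ y₁)
    (hdist : l1dist ν μ ≤ c₂) :
    ε * c₁ / c₂ * l1dist ν μ ≤ Upay u μ y - Upay u ν y := by
  have hdist' : ε * c₁ / c₂ * l1dist ν μ ≤ ε * c₁ :=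
    calc ε * c₁ / c₂ * l1dist ν μ ≤ ε * c₁ / c₂ * c₂ := by gcongr
      _ = ε * c₁ := div_mul_cancel₀ _ hc₂.ne'
  rw [upay_of_forall_eq_mix u _ hy, upay_of_forall_eq_mix u _ hy]
  linarith [mul_le_mul_of_nonneg_left hgap₀ hε0,
    mul_le_mul_of_nonneg_left (sub_nonneg.2 hgap₁) (sub_nonneg.2 hε1)]

end Payoff

theorem stmt4_general {S B : Type*} [Fintype S] [DecidableEq S]
    [Fintype B]
    (m : S → ℝ)
    (u1 : S × B → ℝ)
    (y0 ybar : S → B → ℝ)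
    (hy0strict : ∀ μ : S × S → ℝ, IsCopula m μ → μ ≠ mu0 m →
      Upay u1 (mu0 m) y0 > Upay u1 μ y0)
    (hybarC1 : ∀ μ : S × S → ℝ, IsCopula m μ → Upay u1 (mu0 m) ybar ≥ Upay u1 μ ybar)
    (ε : ℝ) (hε0 : 0 < ε) (hε1 : ε ≤ 1)
    (y : S → B → ℝ) (hy : ∀ a b, y a b = ε * y0 a b + (1 - ε) * ybar a b)
    (c1 c2 : ℝ)
    (hc1 : IsLeast {x : ℝ | ∃ μe ∈ Set.extremePoints ℝ {μ : S × S → ℝ | IsCopula m μ},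
      μe ≠ mu0 m ∧ x = Upay u1 (mu0 m) y0 - Upay u1 μe y0} c1)
    (hc2 : IsGreatest {x : ℝ | ∃ μe ∈ Set.extremePoints ℝ {μ : S × S → ℝ | IsCopula m μ},
      μe ≠ mu0 m ∧ x = l1dist μe (mu0 m)} c2) :
    0 < c1 ∧ 0 < c2 ∧
      ∀ μ : S × S → ℝ, IsCopula m μ →
        Upay u1 (mu0 m) y - Upay u1 μ y ≥ ε * c1 / c2 * l1dist μ (mu0 m) := by
  have hc1pos : 0 < c1 := by
    obtain ⟨μe, hμe, hne, rfl⟩ := hc1.1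
    have hμe' : μe ∈ {μ | IsCopula m μ} := extremePoints_subset hμe
    exact sub_pos.2 (hy0strict μe hμe' hne)
  have hc2pos : 0 < c2 := by
    obtain ⟨μe, -, hne, rfl⟩ := hc2.1
    exact l1dist_pos_of_ne hne
  refine ⟨hc1pos, hc2pos, fun μ hμ => ?_⟩
  set D := ε * c1 / c2
  have hD : 0 ≤ D := by positivity
  have hconv : ConvexOn ℝ {μ | IsCopula m μ} fun ν => Upay u1 ν y + D * l1dist ν (mu0 m) :=
    ((upayLinearMap u1 y).convexOn (convex_setOf_isCopula m)).add
      (((convexOn_l1dist_left (mu0 m)).subset (subset_univ _) (convex_setOf_isCopula m)).smul hD)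
  have hcont : Continuous fun ν => Upay u1 ν y + D * l1dist ν (mu0 m) :=
    (upayLinearMap u1 y).continuous_of_finiteDimensional.add
      (continuous_const.mul (continuous_l1dist_left _))
  have hext (ν) (hν : ν ∈ Set.extremePoints ℝ {μ | IsCopula m μ}) :
      Upay u1 ν y + D * l1dist ν (mu0 m) ≤ Upay u1 (mu0 m) y := by
    rcases eq_or_ne ν (mu0 m) with rfl | hne
    · simp [l1dist_self]
    have hν' : ν ∈ {μ | IsCopula m μ} := extremePoints_subset hν
    linarith [mul_l1dist_le_upay_sub_of_mix u1 hy hε0.le hε1 hc1pos.le hc2pos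
      (hc1.2 ⟨ν, hν, hne, rfl⟩) (hybarC1 ν hν') (hc2.2 ⟨ν, hν, hne, rfl⟩)]
  have := hconv.le_of_forall_extremePoints_le (isCompact_setOf_isCopula m) hcont.continuousOn
    hext μ hμ
  linarith

theorem stmt4 {S B : Type*} [Fintype S] [DecidableEq S] (hS : 1 < Fintype.card S)
    [Fintype B] [Nonempty B]
    (m : S → ℝ) (hm : ∀ s, 0 < m s) (hm1 : ∑ s, m s = 1)
    (u1 : S × B → ℝ)
    (y0 ybar : S → B → ℝ) (hy0 : IsStrategy y0) (hybar : IsStrategy ybar)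
    (hy0strict : ∀ μ : S × S → ℝ, IsCopula m μ → μ ≠ mu0 m →
      Upay u1 (mu0 m) y0 > Upay u1 μ y0)
    (hybarC1 : ∀ μ : S × S → ℝ, IsCopula m μ → Upay u1 (mu0 m) ybar ≥ Upay u1 μ ybar)
    (ε : ℝ) (hε0 : 0 < ε) (hε1 : ε ≤ 1)
    (y : S → B → ℝ) (hy : ∀ a b, y a b = ε * y0 a b + (1 - ε) * ybar a b)
    (c1 c2 : ℝ)
    (hc1 : IsLeast {x : ℝ | ∃ μe ∈ Set.extremePoints ℝ {μ : S × S → ℝ | IsCopula m μ},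
      μe ≠ mu0 m ∧ x = Upay u1 (mu0 m) y0 - Upay u1 μe y0} c1)
    (hc2 : IsGreatest {x : ℝ | ∃ μe ∈ Set.extremePoints ℝ {μ : S × S → ℝ | IsCopula m μ},
      μe ≠ mu0 m ∧ x = l1dist μe (mu0 m)} c2) :
    0 < c1 ∧ 0 < c2 ∧
      ∀ μ : S × S → ℝ, IsCopula m μ →
        Upay u1 (mu0 m) y - Upay u1 μ y ≥ ε * c1 / c2 * l1dist μ (mu0 m) :=
  stmt4_general m u1 y0 ybar hy0strict hybarC1 ε hε0 hε1 y hy c1 c2 hc1 hc2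
end

section
/- Under Assumption A, every copula satisfies the balance property P: for every μ ∈ M(m) and every pair (s',t) ∈ S×S, Σ_{s∈S} (μ(s,t)/m(t))·p(s'|s) = Σ_{t'∈S} (μ(s',t')/m(t'))·p(t'|t). In other words, the set M' of copulas satisfying property P coincides with M(m). -/
/-!
Under Assumption A the kernel is a rank-one matrix plus a multiple of the identity,
`p(s'|s) = α_{s'} + (1 - C) [s = s']`. Both sides of the balance identity therefore equal
`α_{s'} + (1 - C) μ(s', t) / m(t)`: on the left the rank-one part contributes
`α_{s'} ∑_s μ(s,t)/m(t) = α_{s'}`, on the right it contributes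
`∑_{t'} μ(s',t') α_{t'}/m(t') = C m(s') = α_{s'}`.
-/

open Finset

section RankOnePlusScalar

variable {S : Type*} [Fintype S] [DecidableEq S] {α : S → ℝ} {c : ℝ} {p : S → S → ℝ}

theorem transition_eq_add_ite (hp : ∀ s s', s ≠ s' → p s s' = α s')
    (hpd : ∀ s, p s s = 1 - ∑ s' ∈ univ.erase s, α s') (s s' : S) :
    p s s' = α s' + (1 - ∑ x, α x) * if s = s' then 1 else 0 := by
  by_cases h : s = s'
  · subst h
    rw [hpd, sum_erase_eq_sub (mem_univ s), if_pos rfl]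
    ring
  · rw [hp s s' h, if_neg h, mul_zero, add_zero]

theorem sum_mul_transition_left (hp : ∀ s s', p s s' = α s' + c * if s = s' then 1 else 0)
    (w : S → ℝ) (s' : S) :
    ∑ s, w s * p s s' = α s' * ∑ s, w s + c * w s' := by
  simp only [hp, mul_add, sum_add_distrib, ← sum_mul, mul_ite, mul_one, mul_zero,
    sum_ite_eq', mem_univ, if_true]
  ring

theorem sum_mul_transition_right (hp : ∀ s s', p s s' = α s' + c * if s = s' then 1 else 0)
    (w : S → ℝ) (t : S) :
    ∑ t', w t' * p t t' = ∑ t', w t' * α t' + c * w t := by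
  simp only [hp, mul_add, sum_add_distrib, mul_ite, mul_one, mul_zero, sum_ite_eq, mem_univ,
    if_true]
  ring

end RankOnePlusScalar

/- Here `p s s'` denotes the transition probability `p(s' | s)` of moving from `s` to `s'`. -/
theorem stmt6_general {S : Type*} [Fintype S] [DecidableEq S]
    (α : S → ℝ) (hα : ∀ s, 0 < α s)
    (p : S → S → ℝ)
    (hp : ∀ s s', s ≠ s' → p s s' = α s')
    (hpd : ∀ s, p s s = 1 - ∑ s' ∈ Finset.univ.erase s, α s')
    (C : ℝ) (hC : C = ∑ s, α s)
    (m : S → ℝ) (hm : ∀ s, m s = α s / C)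
    (μ : S × S → ℝ) (hμ : IsCopula m μ) :
    ∀ s' t : S, ∑ s, μ (s, t) / m t * p s s' = ∑ t', μ (s', t') / m t' * p t t' := by
  intro s' t
  obtain ⟨-, -, hrow, hcol⟩ := hμ
  have hC_pos : 0 < C := hC ▸ sum_pos (fun s _ => hα s) ⟨t, mem_univ t⟩
  have hα_eq : ∀ s, α s = m s * C := fun s => by rw [hm, div_mul_cancel₀ _ hC_pos.ne']
  have hm_ne : ∀ s, m s ≠ 0 := fun s => by rw [hm]; exact (div_pos (hα s) hC_pos).ne'
  have hkernel := transition_eq_add_ite hp hpd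
  rw [← hC] at hkernel
  rw [sum_mul_transition_left hkernel, sum_mul_transition_right hkernel]
  congr 1
  calc α s' * ∑ s, μ (s, t) / m t
      = α s' := by rw [← sum_div, hcol, div_self (hm_ne t), mul_one]
    _ = (∑ t', μ (s', t')) * C := by rw [hrow, hα_eq]
    _ = ∑ t', μ (s', t') / m t' * α t' := by
      rw [sum_mul]
      refine sum_congr rfl fun t' _ => ?_
      rw [hα_eq, ← mul_assoc, div_mul_cancel₀ _ (hm_ne t')]

theorem stmt6 {S : Type*} [Fintype S] [DecidableEq S] (hS : 1 < Fintype.card S)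
    (α : S → ℝ) (hα : ∀ s, 0 < α s)
    (hαsum : ∀ sbar : S, ∑ s ∈ Finset.univ.erase sbar, α s ≤ 1)
    (p : S → S → ℝ)
    (hp : ∀ s s', s ≠ s' → p s s' = α s')
    (hpd : ∀ s, p s s = 1 - ∑ s' ∈ Finset.univ.erase s, α s')
    (C : ℝ) (hC : C = ∑ s, α s)
    (m : S → ℝ) (hm : ∀ s, m s = α s / C)
    (μ : S × S → ℝ) (hμ : IsCopula m μ) :
    ∀ s' t : S, ∑ s, μ (s, t) / m t * p s s' = ∑ t', μ (s', t') / m t' * p t t' :=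
  stmt6_general α hα p hp hpd C hC m hm μ hμ
end

section
/- Let μ ∈ M(m) satisfy property P, and define μ̄ on S×S×S by μ̄(t',s,t) = μ(s,t)·p(t|t')·m(t')/m(t). Then μ̄ is a probability distribution on S×S×S and: (1) the marginal of μ̄ on the second and third coordinates equals μ; (2) the marginal of μ̄ on the first and third coordinates is (t',t) ↦ m(t')·p(t|t'); (3) the marginal of μ̄ on the first and second coordinates satisfies μ̄_{1,2}(t',s') = Σ_{s∈S} μ(s,t')·p(s'|s) for all t',s'; (4) whenever m(t')·p(t|t') > 0, the conditional law of the second coordinate given that the first and third coordinates equal (t',t) is μ̄(s|t',t) = μ(s,t)/m(t). -/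
open Finset

noncomputable def copulaLift {S : Type*} (p : S → S → ℝ) (m : S → ℝ) (μ : S × S → ℝ) :
    S × S × S → ℝ
  | (t', s, t) => μ (s, t) / m t * (m t' * p t' t)

namespace copulaLift

variable {S : Type*} {p : S → S → ℝ} {m : S → ℝ} {μ : S × S → ℝ}

theorem nonneg (hμ : ∀ q, 0 ≤ μ q) (hp : ∀ s s', 0 ≤ p s s') (hm : ∀ s, 0 ≤ m s)
    (q : S × S × S) : 0 ≤ copulaLift p m μ q := by
  obtain ⟨t', s, t⟩ := q
  exact mul_nonneg (div_nonneg (hμ _) (hm t)) (mul_nonneg (hm t') (hp t' t))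

theorem sum_fst [Fintype S] (hstat : ∀ s', ∑ s, m s * p s s' = m s') {t : S} (ht : m t ≠ 0)
    (s : S) :
    ∑ t', copulaLift p m μ (t', s, t) = μ (s, t) := by
  simp only [copulaLift, ← mul_sum, hstat, div_mul_cancel₀ _ ht]

theorem sum_eq [Fintype S] (hstat : ∀ s', ∑ s, m s * p s s' = m s') (hm : ∀ s, m s ≠ 0) :
    ∑ q, copulaLift p m μ q = ∑ q, μ q := by
  rw [Fintype.sum_prod_type, sum_comm]
  exact sum_congr rfl fun q _ => sum_fst hstat (hm q.2) q.1

theorem sum_snd [Fintype S] {t : S} (hμt : ∑ s, μ (s, t) = m t) (ht : m t ≠ 0) (t' : S) :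
    ∑ s, copulaLift p m μ (t', s, t) = m t' * p t' t := by
  simp only [copulaLift, ← sum_mul, ← sum_div, hμt, div_self ht, one_mul]

theorem sum_thd [Fintype S] {t' s' : S}
    (hP : ∑ s, μ (s, t') / m t' * p s s' = ∑ t, μ (s', t) / m t * p t' t) (ht' : m t' ≠ 0) :
    ∑ t, copulaLift p m μ (t', s', t) = ∑ s, μ (s, t') * p s s' := by
  calc ∑ t, copulaLift p m μ (t', s', t)
      = m t' * ∑ t, μ (s', t) / m t * p t' t := by
        simp only [copulaLift, mul_sum]
        exact sum_congr rfl fun t _ => by ring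
    _ = ∑ s, μ (s, t') * p s s' := by
        rw [← hP, mul_sum]
        exact sum_congr rfl fun s _ => by field_simp

theorem div_pair_law {t' t : S} (h : m t' * p t' t ≠ 0) (s : S) :
    copulaLift p m μ (t', s, t) / (m t' * p t' t) = μ (s, t) / m t :=
  mul_div_cancel_right₀ _ h

end copulaLift

/- Here `p s s'` denotes the transition probability `p(s' | s)` of moving from `s` to `s'`,
and `μbar (t', s, t)` is the measure `μ̄(t',s,t) = μ(s,t)·p(t|t')·m(t')/m(t)`. -/
theorem stmt7_general {S : Type*} [Fintype S]
    (p : S → S → ℝ) (hp0 : ∀ s s', 0 ≤ p s s')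
    (m : S → ℝ) (hm : ∀ s, 0 < m s)
    (hstat : ∀ s', ∑ s, m s * p s s' = m s')
    (μ : S × S → ℝ) (hμ : IsCopula m μ)
    (hP : ∀ s' t : S, ∑ s, μ (s, t) / m t * p s s' = ∑ t', μ (s', t') / m t' * p t t')
    (μbar : S × S × S → ℝ)
    (hμbar : ∀ t' s t : S, μbar (t', s, t) = μ (s, t) * p t' t * m t' / m t) :
    (∀ q, 0 ≤ μbar q) ∧ (∑ q : S × S × S, μbar q = 1) ∧
      (∀ s t : S, ∑ t', μbar (t', s, t) = μ (s, t)) ∧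
      (∀ t' t : S, ∑ s, μbar (t', s, t) = m t' * p t' t) ∧
      (∀ t' s' : S, ∑ t, μbar (t', s', t) = ∑ s, μ (s, t') * p s s') ∧
      (∀ t' s t : S, 0 < m t' * p t' t →
        μbar (t', s, t) / (m t' * p t' t) = μ (s, t) / m t) := by
  obtain ⟨hμ0, hμ1, -, hμm⟩ := hμ
  have hm0 : ∀ s, m s ≠ 0 := fun s => (hm s).ne'
  obtain rfl : μbar = copulaLift p m μ := by
    funext ⟨t', s, t⟩
    rw [hμbar, copulaLift]
    ring
  exact ⟨copulaLift.nonneg hμ0 hp0 fun s => (hm s).le,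
    (copulaLift.sum_eq hstat hm0).trans hμ1,
    fun s t => copulaLift.sum_fst hstat (hm0 t) s,
    fun t' t => copulaLift.sum_snd (hμm t) (hm0 t) t',
    fun t' s' => copulaLift.sum_thd (hP s' t') (hm0 t'),
    fun t' s t h => copulaLift.div_pair_law h.ne' s⟩

theorem stmt7 {S : Type*} [Fintype S] [Nonempty S]
    (p : S → S → ℝ) (hp0 : ∀ s s', 0 ≤ p s s') (hp1 : ∀ s, ∑ s', p s s' = 1)
    (m : S → ℝ) (hm : ∀ s, 0 < m s) (hm1 : ∑ s, m s = 1)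
    (hstat : ∀ s', ∑ s, m s * p s s' = m s')
    (μ : S × S → ℝ) (hμ : IsCopula m μ)
    (hP : ∀ s' t : S, ∑ s, μ (s, t) / m t * p s s' = ∑ t', μ (s', t') / m t' * p t t')
    (μbar : S × S × S → ℝ)
    (hμbar : ∀ t' s t : S, μbar (t', s, t) = μ (s, t) * p t' t * m t' / m t) :
    (∀ q, 0 ≤ μbar q) ∧ (∑ q : S × S × S, μbar q = 1) ∧
      (∀ s t : S, ∑ t', μbar (t', s, t) = μ (s, t)) ∧
      (∀ t' t : S, ∑ s, μbar (t', s, t) = m t' * p t' t) ∧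
      (∀ t' s' : S, ∑ t, μbar (t', s', t) = ∑ s, μ (s, t') * p s s') ∧
      (∀ t' s t : S, 0 < m t' * p t' t →
        μbar (t', s, t) / (m t' * p t' t) = μ (s, t) / m t) :=
  stmt7_general p hp0 m hm hstat μ hμ hP μbar hμbar
end

section
/- Let μ ∈ M(m) satisfy property P. Then for every n ≥ 1 there exists a probability distribution ν on (S×S)^n, describing the joint law of ((s₁,t₁),…,(sₙ,tₙ)), such that: (P2) the marginal law of (t₁,…,tₙ) equals the marginal law of (s₁,…,sₙ), and both equal the n-step Markov chain law with initial distribution m and transition kernel p, i.e., ν assigns to (s₁,…,sₙ) the probability m(s₁)·p(s₂|s₁)·⋯·p(sₙ|sₙ₋₁); (P3) for every k ≤ n, the law of the pair (s_k,t_k) under ν is μ; (P4) for every k ≤ n and every history (t₁,…,t_k) with positive ν-probability, the conditional law of s_k given (t₁,…,t_k) is μ(·|t_k); (P1) for every k < n, conditional on s_k, the vector (t₁,…,t_k) is independent of (s_{k+1},…,sₙ) under ν. -/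
/-!
Take for `ν` the law of a Markov chain on pairs `(s, t)` started from `μ`: `s` moves by `p(s'|s)`,
then `t'` is drawn from the posterior `∝ μ(s'|t') p(t'|t)`, whose normaliser is
`∑ₛ μ(s|t) p(s'|s)` by property P. Summed over `t'` this kernel is `p(s'|s)`, so the
`s`-coordinates form a `p`-chain whose future, given `s_k`, ignores the past (P1, P2). The identity
`∑ₛ μ(s,t) Q((s,t),(s',t')) = m(t) p(t'|t) μ(s'|t')` drives a forward-filtering induction: the
mass of `{t₁ … t_k = ts, s_k = s}` is `μ(s|t_k)` times the `p`-chain probability of `ts` (P2, P4);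
summing it over `t` and using stationarity of `m` shows that `μ` is invariant (P3).
-/

open Finset

/-- The law of the `n`-step Markov chain with initial distribution `m` and transition
kernel `p` (where `p s s'` is the probability of moving from `s` to `s'`):
`markov p m n hn w = m(w₀)·p(w₁|w₀)·⋯·p(w_{n-1}|w_{n-2})`. -/
def markov {S : Type*} (p : S → S → ℝ) (m : S → ℝ) (n : ℕ) (hn : 1 ≤ n)
    (w : Fin n → S) : ℝ :=
  m (w ⟨0, hn⟩) * ∏ i : Fin (n - 1),
    p (w ⟨i.1, by have := i.2; omega⟩) (w ⟨i.1 + 1, by have := i.2; omega⟩)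

section ChainWeight

variable {α : Type*} [Fintype α] (π : α → ℝ) (Q : α → α → ℝ)

def chainWeight (N : ℕ) (v : Fin (N + 1) → α) : ℝ :=
  π (v 0) * ∏ i : Fin N, Q (v i.castSucc) (v i.succ)

variable (C : ℕ → α → Prop) [∀ j, DecidablePred (C j)]

noncomputable def forwardMass : ℕ → α → ℝ
  | 0, x => if C 0 x then π x else 0
  | j + 1, y => if C (j + 1) y then ∑ x, forwardMass j x * Q x y else 0

variable {π Q C}

omit [Fintype α] in
lemma chainWeight_nonneg (hπ : ∀ x, 0 ≤ π x) (hQ : ∀ x y, 0 ≤ Q x y) {N : ℕ}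
    (v : Fin (N + 1) → α) : 0 ≤ chainWeight π Q N v :=
  mul_nonneg (hπ _) (prod_nonneg fun _ _ => hQ _ _)

omit [Fintype α] in
lemma chainWeight_snoc {N : ℕ} (u : Fin (N + 1) → α) (y : α) :
    chainWeight π Q (N + 1) (Fin.snoc u y) = chainWeight π Q N u * Q (u (Fin.last N)) y := by
  simp only [chainWeight, Fin.prod_univ_castSucc, Fin.succ_castSucc, Fin.snoc_castSucc,
    Fin.succ_last, Fin.snoc_last, mul_assoc]
  rfl

omit [Fintype α] [∀ j, DecidablePred (C j)] in
lemma forall_snoc_iff {N : ℕ} (u : Fin (N + 1) → α) (y : α) :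
    (∀ i : Fin (N + 2), C i ((Fin.snoc u y : Fin (N + 2) → α) i)) ↔
      (∀ i : Fin (N + 1), C i (u i)) ∧ C (N + 1) y := by
  rw [Fin.forall_fin_succ']
  simp

theorem sum_filter_chainWeight_mul (N : ℕ) (f : α → ℝ) :
    ∑ v ∈ univ.filter (fun v : Fin (N + 1) → α => ∀ i : Fin (N + 1), C i (v i)),
        chainWeight π Q N v * f (v (Fin.last N)) =
      ∑ x, forwardMass π Q C N x * f x := by
  induction N generalizing f with
  | zero =>
    rw [sum_filter, ← (Equiv.funUnique (Fin 1) α).symm.sum_comp]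
    simp [chainWeight, forwardMass, ite_mul]
  | succ N ih =>
    set g : α → ℝ := fun x => ∑ y, Q x y * if C (N + 1) y then f y else 0
    calc _ = ∑ u ∈ univ.filter (fun u : Fin (N + 1) → α => ∀ i : Fin (N + 1), C i (u i)),
          chainWeight π Q N u * g (u (Fin.last N)) := by
          rw [sum_filter, sum_filter, ← (Fin.snocEquiv fun _ => α).sum_comp,
            Fintype.sum_prod_type, sum_comm]
          refine sum_congr rfl fun u _ => ?_
          simp only [Fin.snocEquiv, Equiv.coe_fn_mk, forall_snoc_iff, chainWeight_snoc,
            Fin.snoc_last, g, mul_sum]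
          by_cases hu : ∀ i : Fin (N + 1), C i (u i) <;> simp [hu, mul_assoc]
      _ = ∑ x, forwardMass π Q C N x * g x := ih g
      _ = ∑ y, forwardMass π Q C (N + 1) y * f y := by
          simp only [g, forwardMass, mul_sum, sum_mul, ite_mul, zero_mul]
          rw [sum_comm]
          refine sum_congr rfl fun y _ => ?_
          split_ifs <;> simp [mul_assoc]

theorem sum_filter_chainWeight {N : ℕ} {P : (Fin (N + 1) → α) → Prop} [DecidablePred P]
    (h : ∀ v, P v ↔ ∀ i : Fin (N + 1), C i (v i)) :
    ∑ v ∈ univ.filter P, chainWeight π Q N v = ∑ x, forwardMass π Q C N x := by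
  rw [filter_congr fun v _ => h v]
  simpa using sum_filter_chainWeight_mul (C := C) (π := π) (Q := Q) N (fun _ => 1)

lemma forwardMass_eq_zero {j : ℕ} {x : α} (h : ¬ C j x) : forwardMass π Q C j x = 0 := by
  cases j <;> simp [forwardMass, h]

lemma forwardMass_congr {C' : ℕ → α → Prop} [∀ j, DecidablePred (C' j)] :
    ∀ k, (∀ i ≤ k, ∀ x, C i x ↔ C' i x) → forwardMass π Q C k = forwardMass π Q C' k
  | 0, h => funext fun x => by simp [forwardMass, h 0 le_rfl x]
  | k + 1, h => funext fun x => by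
    simp [forwardMass, h (k + 1) le_rfl x,
      forwardMass_congr k fun i hi => h i (by omega)]

theorem forwardMass_of_forall_lt (hπ : ∀ y, ∑ x, π x * Q x y = π y) :
    ∀ k, (∀ i < k, ∀ x, C i x) → ∀ x, forwardMass π Q C k x = if C k x then π x else 0
  | 0, _, x => rfl
  | k + 1, h, y => by
    have ih := forwardMass_of_forall_lt hπ k (fun i hi => h i (by omega))
    simp only [forwardMass, ih, if_pos (h k (by omega) _), hπ]

theorem sum_forwardMass_of_forall_gt (hQ : ∀ x, ∑ y, Q x y = 1) {k j : ℕ} (hkj : k ≤ j)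
    (h : ∀ i, k < i → i ≤ j → ∀ x, C i x) :
    ∑ x, forwardMass π Q C j x = ∑ x, forwardMass π Q C k x := by
  induction j, hkj using Nat.le_induction with
  | base => rfl
  | succ j hkj ih =>
    rw [← ih fun i hi hij => h i hi (by omega)]
    simp only [forwardMass, if_pos (h _ (by omega) le_rfl _)]
    rw [sum_comm]
    simp [← mul_sum, hQ]

end ChainWeight

theorem sum_forwardMass_eq_mul_prod {β γ : Type*} [Fintype β] [DecidableEq β] [Fintype γ]
    {π : β × γ → ℝ} {Q : β × γ → β × γ → ℝ} {C : ℕ → β × γ → Prop}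
    [∀ j, DecidablePred (C j)] {p : β → β → ℝ} (hQ : ∀ s t s', ∑ t', Q (s, t) (s', t') = p s s')
    (w : ℕ → β) {k j : ℕ} (hkj : k ≤ j) (hk : ∀ x, C k x → x.1 = w k)
    (h : ∀ i, k < i → i ≤ j → ∀ x, C i x ↔ x.1 = w i) :
    ∑ x, forwardMass π Q C j x =
      (∑ x, forwardMass π Q C k x) * ∏ i ∈ Ico k j, p (w i) (w (i + 1)) := by
  induction j, hkj using Nat.le_induction with
  | base => simp
  | succ j hkj ih =>
    have hsupp : ∀ x, C j x → x.1 = w j := by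
      rcases hkj.eq_or_lt with rfl | hlt
      · exact hk
      · exact fun x hx => (h j hlt (by omega) x).1 hx
    calc ∑ y, forwardMass π Q C (j + 1) y
        = ∑ x, forwardMass π Q C j x * ∑ t', Q x (w (j + 1), t') := by
          simp only [forwardMass, h (j + 1) (by omega) le_rfl,
            Fintype.sum_prod_type (f := fun y => ite _ _ _)]
          rw [sum_comm]
          simp [mul_sum, sum_comm (γ := β × γ)]
      _ = (∑ x, forwardMass π Q C j x) * p (w j) (w (j + 1)) := by
          rw [sum_mul]
          refine sum_congr rfl fun x _ => ?_
          by_cases hx : C j x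
          · rw [← hsupp x hx, ← hQ]
          · simp [forwardMass_eq_zero hx]
      _ = _ := by
          rw [ih fun i hi hij => h i hi (by omega), prod_Ico_succ_top hkj, mul_assoc]

lemma sum_filter_forall_fst_eq {ι β γ : Type*} [Fintype ι] [DecidableEq ι] [Fintype β]
    [Fintype γ] (w : ι → β) [DecidablePred fun v : ι → β × γ => ∀ i, (v i).1 = w i]
    (f : (ι → β × γ) → ℝ) :
    ∑ v ∈ univ.filter (fun v : ι → β × γ => ∀ i, (v i).1 = w i), f v =
      ∑ b : ι → γ, f (fun i => (w i, b i)) := by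
  symm
  refine sum_nbij' (fun b i => (w i, b i)) (fun v i => (v i).2) ?_ ?_ ?_ ?_ ?_ <;>
    simp +contextual [funext_iff, Prod.ext_iff]

lemma sum_filter_forall_snd_eq {ι β γ : Type*} [Fintype ι] [DecidableEq ι] [Fintype β]
    [Fintype γ] (w : ι → γ) [DecidablePred fun v : ι → β × γ => ∀ i, (v i).2 = w i]
    (f : (ι → β × γ) → ℝ) :
    ∑ v ∈ univ.filter (fun v : ι → β × γ => ∀ i, (v i).2 = w i), f v =
      ∑ a : ι → β, f (fun i => (a i, w i)) := by
  symm
  refine sum_nbij' (fun a i => (a i, w i)) (fun v i => (v i).1) ?_ ?_ ?_ ?_ ?_ <;>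
    simp +contextual [funext_iff, Prod.ext_iff]

section Coupling

variable {S : Type*} [Fintype S] (p : S → S → ℝ) (m : S → ℝ) (μ : S × S → ℝ)

noncomputable def predictive (t s' : S) : ℝ := ∑ s, μ (s, t) / m t * p s s'

/- Where the normaliser `predictive p m μ t s'` vanishes, no state `(s, t)` of positive `μ`-mass
can move to `s'`; letting `t` move by `p` there only keeps the kernel stochastic. -/
noncomputable def couplingKernel (x y : S × S) : ℝ :=
  p x.1 y.1 * p x.2 y.2 *
    if predictive p m μ x.2 y.1 = 0 then 1 else μ y / m y.2 / predictive p m μ x.2 y.1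

noncomputable def coupledChain (N : ℕ) : (Fin (N + 1) → S × S) → ℝ :=
  chainWeight μ (couplingKernel p m μ) N

variable {p m μ}
variable (hp0 : ∀ s s', 0 ≤ p s s') (hp1 : ∀ s, ∑ s', p s s' = 1) (hm : ∀ s, 0 < m s)
  (hμ : IsCopula m μ)
  (hP : ∀ s' t : S, ∑ s, μ (s, t) / m t * p s s' = ∑ t', μ (s', t') / m t' * p t t')
  (hstat : ∀ s', ∑ s, m s * p s s' = m s')

include hp0 hm hμ in
lemma couplingKernel_nonneg (x y : S × S) : 0 ≤ couplingKernel p m μ x y := by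
  have hD : 0 ≤ predictive p m μ x.2 y.1 :=
    sum_nonneg fun s _ => mul_nonneg (div_nonneg (hμ.1 _) (hm _).le) (hp0 _ _)
  unfold couplingKernel
  split_ifs
  · exact mul_nonneg (mul_nonneg (hp0 _ _) (hp0 _ _)) zero_le_one
  · exact mul_nonneg (mul_nonneg (hp0 _ _) (hp0 _ _))
      (div_nonneg (div_nonneg (hμ.1 _) (hm _).le) hD)

include hp1 hP in
lemma sum_couplingKernel_snd (s t s' : S) :
    ∑ t', couplingKernel p m μ (s, t) (s', t') = p s s' := by
  simp only [couplingKernel, mul_assoc, ← mul_sum]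
  split_ifs with hD
  · simp [hp1]
  · have hD' : predictive p m μ t s' = ∑ t', μ (s', t') / m t' * p t t' := hP s' t
    have hsum : ∑ t', p t t' * (μ (s', t') / m t' / predictive p m μ t s') = 1 := by
      simp only [← mul_div_assoc, ← sum_div]
      rw [div_eq_one_iff_eq hD, hD']
      exact sum_congr rfl fun _ _ => by ring
    rw [hsum, mul_one]

include hp1 hP in
lemma sum_couplingKernel (x : S × S) : ∑ y, couplingKernel p m μ x y = 1 := by
  rw [Fintype.sum_prod_type]
  simp only [sum_couplingKernel_snd hp1 hP, hp1]

include hp0 hm hμ hP in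
lemma sum_mul_couplingKernel (t s' t' : S) :
    ∑ s, μ (s, t) * couplingKernel p m μ (s, t) (s', t') =
      m t * p t t' * (μ (s', t') / m t') := by
  have hmass : ∑ s, μ (s, t) * p s s' = m t * predictive p m μ t s' := by
    rw [predictive, mul_sum]
    exact sum_congr rfl fun s _ => by field_simp [(hm t).ne']
  simp only [couplingKernel, ← mul_assoc, ← sum_mul, hmass]
  split_ifs with hD
  · have hzero : ∑ t'', μ (s', t'') / m t'' * p t t'' = 0 := (hP s' t).symm.trans hD
    have := (sum_eq_zero_iff_of_nonneg fun t'' _ =>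
      mul_nonneg (div_nonneg (hμ.1 _) (hm t'').le) (hp0 t t'')).1 hzero t' (mem_univ _)
    rw [hD]
    linear_combination (-m t) * this
  · field_simp

include hp0 hm hμ hP hstat in
lemma sum_mul_couplingKernel_eq_self (y : S × S) : ∑ x, μ x * couplingKernel p m μ x y = μ y := by
  obtain ⟨s', t'⟩ := y
  rw [Fintype.sum_prod_type, sum_comm]
  simp only [sum_mul_couplingKernel hp0 hm hμ hP, ← sum_mul, hstat]
  field_simp [(hm t').ne']

include hp0 hm hμ hP in
theorem forwardMass_couplingKernel_of_history [DecidableEq S] (ts : ℕ → S)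
    {C : ℕ → S × S → Prop} [∀ j, DecidablePred (C j)] :
    ∀ k, (∀ i < k, ∀ x, C i x ↔ x.2 = ts i) → (∀ x, C k x → x.2 = ts k) → ∀ x,
      forwardMass μ (couplingKernel p m μ) C k x =
        if C k x then μ x / m (ts k) * (m (ts 0) * ∏ i ∈ range k, p (ts i) (ts (i + 1)))
        else 0
  | 0, _, hk, x => by
    simp only [forwardMass, range_zero, prod_empty, mul_one]
    split_ifs with hx
    · rw [← hk x hx]
      field_simp [(hm _).ne']
    · rfl
  | k + 1, h, hk, ⟨s', t'⟩ => by
    have ih := forwardMass_couplingKernel_of_history ts k (fun i hi => h i (by omega))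
      (fun x => (h k (by omega) x).1)
    simp only [forwardMass]
    split_ifs with hy
    · obtain rfl : t' = ts (k + 1) := hk _ hy
      set H := m (ts 0) * ∏ i ∈ range k, p (ts i) (ts (i + 1))
      calc ∑ x, forwardMass μ (couplingKernel p m μ) C k x *
            couplingKernel p m μ x (s', ts (k + 1))
          = H / m (ts k) *
              ∑ s, μ (s, ts k) * couplingKernel p m μ (s, ts k) (s', ts (k + 1)) := by
            simp only [ih, h k (by omega), ite_mul, zero_mul, Fintype.sum_prod_type]
            simp only [sum_ite_eq', mem_univ, if_true, mul_sum]
            exact sum_congr rfl fun _ _ => by ring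
        _ = _ := by
            rw [sum_mul_couplingKernel hp0 hm hμ hP, prod_range_succ]
            field_simp [(hm (ts k)).ne']
            ring
    · rfl

/- `ℕ`-indexed constraints read `Fin (N + 1)`-indexed data through the cast `ℕ → Fin (N + 1)`,
which wraps around; only indices `≤ N` ever matter. -/
open Fin.NatCast

omit [Fintype S] in
lemma markov_succ_eq (N : ℕ) (hn : 1 ≤ N + 1) (w : Fin (N + 1) → S) :
    markov p m (N + 1) hn w = m (w 0) * ∏ i ∈ range N, p (w i) (w (i + 1)) := by
  rw [markov, ← Fin.prod_univ_eq_prod_range]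
  congr 1
  refine prod_congr rfl fun i _ => ?_
  congr 2 <;> ext <;> simp

variable {N : ℕ}

include hp0 hp1 hm hμ hP hstat in
theorem sum_filter_coupledChain_eval (k : Fin (N + 1)) (R : S × S → Prop)
    [DecidablePred R] :
    ∑ v ∈ univ.filter (fun v : Fin (N + 1) → S × S => R (v k)), coupledChain p m μ N v =
      ∑ x ∈ univ.filter R, μ x := by
  rw [coupledChain, sum_filter_chainWeight (C := fun i x => i = (k : ℕ) → R x)
      fun v => ⟨fun h i hi => Fin.ext hi ▸ h, fun h => h k rfl⟩,
    sum_forwardMass_of_forall_gt (sum_couplingKernel hp1 hP) k.is_le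
      (fun i hi _ x hik => absurd hik (by omega)), sum_filter]
  refine sum_congr rfl fun x _ => ?_
  rw [forwardMass_of_forall_lt (sum_mul_couplingKernel_eq_self hp0 hm hμ hP hstat) k
    (fun i hi x hik => absurd hik (by omega))]
  simp

variable [DecidableEq S]

include hp0 hp1 hm hμ hP in
theorem sum_filter_coupledChain_history (k : Fin (N + 1)) (ts : Fin (N + 1) → S)
    (R : S × S → Prop) [DecidablePred R] :
    ∑ v ∈ univ.filter (fun v : Fin (N + 1) → S × S => (∀ i ≤ k, (v i).2 = ts i) ∧ R (v k)),
        coupledChain p m μ N v =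
      (∑ s ∈ univ.filter (fun s => R (s, ts k)), μ (s, ts k)) / m (ts k) *
        (m (ts 0) * ∏ i ∈ range k, p (ts i) (ts (i + 1))) := by
  rw [coupledChain,
    sum_filter_chainWeight (C := fun i x => (i ≤ k → x.2 = ts i) ∧ (i = k → R x))
      fun v => by simp [forall_and, Fin.val_inj],
    sum_forwardMass_of_forall_gt (sum_couplingKernel hp1 hP) k.is_le
      (fun i hi _ x => ⟨fun h => absurd h (by omega), fun h => absurd h (by omega)⟩)]
  rw [sum_congr rfl fun x _ => forwardMass_couplingKernel_of_history hp0 hm hμ hP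
    (fun i => ts i) k (fun i hi x => by simp [hi.le, hi.ne]) (fun x hx => hx.1 le_rfl) x]
  simp only [Fintype.sum_prod_type, sum_div, sum_mul, sum_filter]
  simp [ite_and]
  exact sum_congr rfl fun _ _ => by split_ifs <;> simp

include hp1 hP in
theorem sum_filter_coupledChain_future (k : Fin (N + 1)) (s : S) (ws : Fin (N + 1) → S)
    (R : Fin (N + 1) → S × S → Prop) [∀ i, DecidablePred (R i)] :
    ∑ v ∈ univ.filter (fun v : Fin (N + 1) → S × S =>
        (v k).1 = s ∧ (∀ i ≤ k, R i (v i)) ∧ ∀ j, k < j → (v j).1 = ws j),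
        coupledChain p m μ N v =
      (∑ v ∈ univ.filter (fun v : Fin (N + 1) → S × S => (v k).1 = s ∧ ∀ i ≤ k, R i (v i)),
          coupledChain p m μ N v) *
        ∏ i ∈ Ico (k : ℕ) N, p (if i = k then s else ws i) (ws (i + 1)) := by
  rw [coupledChain,
    sum_filter_chainWeight
      (C := fun i x => ((i = (k : ℕ) → x.1 = s) ∧ (i ≤ (k : ℕ) → R i x)) ∧
        ((k : ℕ) < i → x.1 = ws i))
      fun v => by simp [forall_and, Fin.val_inj, and_assoc],
    sum_filter_chainWeight (C := fun i x => (i = (k : ℕ) → x.1 = s) ∧ (i ≤ (k : ℕ) → R i x))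
      fun v => by simp [forall_and, Fin.val_inj],
    sum_forwardMass_eq_mul_prod (sum_couplingKernel_snd hp1 hP)
      (fun i : ℕ => if i = k then s else ws i) k.is_le
      (fun x hx => by simpa using hx.1.1 rfl)
      (fun i hi _ x => by simp [hi, hi.ne', hi.not_ge]),
    forwardMass_congr (C' := fun i x => (i = (k : ℕ) → x.1 = s) ∧ (i ≤ (k : ℕ) → R i x)) k
      (fun i hi x => by simp [hi, hi.not_gt]),
    sum_forwardMass_of_forall_gt (sum_couplingKernel hp1 hP) k.is_le
      (fun i hi _ x => ⟨fun h => absurd h hi.ne', fun h => absurd h hi.not_ge⟩)]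
  congr 1
  refine prod_congr rfl fun i hi => ?_
  have : i + 1 ≠ k := by have := (mem_Ico.1 hi).1; omega
  simp [this]

include hp1 hμ hP in
theorem sum_filter_coupledChain_fst (w : Fin (N + 1) → S) :
    ∑ v ∈ univ.filter (fun v : Fin (N + 1) → S × S => ∀ i, (v i).1 = w i),
        coupledChain p m μ N v = m (w 0) * ∏ i ∈ range N, p (w i) (w (i + 1)) := by
  rw [coupledChain, sum_filter_chainWeight (C := fun i x => x.1 = w i) fun v => by simp,
    sum_forwardMass_eq_mul_prod (sum_couplingKernel_snd hp1 hP) (fun i : ℕ => w i) N.zero_le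
      (fun _ hx => hx) (fun _ _ _ _ => Iff.rfl), range_eq_Ico]
  simp only [forwardMass, Fintype.sum_prod_type]
  rw [sum_comm]
  simp [hμ.2.2.1]

end Coupling

theorem stmt8_general {S : Type*} [Fintype S] [DecidableEq S]
    (p : S → S → ℝ) (hp0 : ∀ s s', 0 ≤ p s s') (hp1 : ∀ s, ∑ s', p s s' = 1)
    (m : S → ℝ) (hm : ∀ s, 0 < m s)
    (hstat : ∀ s', ∑ s, m s * p s s' = m s')
    (μ : S × S → ℝ) (hμ : IsCopula m μ)
    (hP : ∀ s' t : S, ∑ s, μ (s, t) / m t * p s s' = ∑ t', μ (s', t') / m t' * p t t')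
    (n : ℕ) (hn : 1 ≤ n) :
    ∃ ν : (Fin n → S × S) → ℝ,
      (∀ v, 0 ≤ ν v) ∧ (∑ v, ν v = 1) ∧
      -- P2 : the sequence of fictitious states has the same law as the sequence of true
      -- states, and both laws are the `n`-step Markov chain law.
      (∀ w : Fin n → S,
        (∑ v : Fin n → S, ν (fun i => (w i, v i)) = markov p m n hn w) ∧
        (∑ v : Fin n → S, ν (fun i => (v i, w i)) = markov p m n hn w)) ∧
      -- P3 : the law of the pair `(s_k, t_k)` is `μ`.
      (∀ k : Fin n, ∀ s t : S,
        ∑ v ∈ Finset.univ.filter (fun v : Fin n → S × S => v k = (s, t)), ν v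
          = μ (s, t)) ∧
      -- P4 : the conditional law of `s_k` given `(t₁,…,t_k)` is `μ(· | t_k)`.
      (∀ k : Fin n, ∀ ts : Fin n → S,
        0 < (∑ v ∈ Finset.univ.filter
              (fun v : Fin n → S × S => ∀ i ≤ k, (v i).2 = ts i), ν v) →
        ∀ s : S,
          (∑ v ∈ Finset.univ.filter
              (fun v : Fin n → S × S => (∀ i ≤ k, (v i).2 = ts i) ∧ (v k).1 = s), ν v)
            = μ (s, ts k) / m (ts k) *
              ∑ v ∈ Finset.univ.filter
                (fun v : Fin n → S × S => ∀ i ≤ k, (v i).2 = ts i), ν v) ∧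
      -- P1 : conditionally on `s_k`, the vector `(t₁,…,t_k)` is independent of the
      -- future states `(s_{k+1},…,sₙ)`.
      (∀ k : Fin n, ∀ s : S, ∀ ts ws : Fin n → S,
        (∑ v ∈ Finset.univ.filter (fun v : Fin n → S × S =>
            (v k).1 = s ∧ (∀ i ≤ k, (v i).2 = ts i) ∧ ∀ j, k < j → (v j).1 = ws j), ν v) *
        (∑ v ∈ Finset.univ.filter (fun v : Fin n → S × S => (v k).1 = s), ν v) =
        (∑ v ∈ Finset.univ.filter (fun v : Fin n → S × S =>
            (v k).1 = s ∧ ∀ i ≤ k, (v i).2 = ts i), ν v) *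
        (∑ v ∈ Finset.univ.filter (fun v : Fin n → S × S =>
            (v k).1 = s ∧ ∀ j, k < j → (v j).1 = ws j), ν v)) := by
  obtain ⟨N, rfl⟩ : ∃ N, n = N + 1 := ⟨n - 1, by omega⟩
  have hnow := sum_filter_coupledChain_eval hp0 hp1 hm hμ hP hstat (N := N)
  have hpast := sum_filter_coupledChain_history hp0 hp1 hm hμ hP (N := N)
  have hfuture := sum_filter_coupledChain_future hp1 hP (N := N)
  refine ⟨coupledChain p m μ N, chainWeight_nonneg hμ.1 (couplingKernel_nonneg hp0 hm hμ),
    ?_, fun w => ⟨?_, ?_⟩, fun k s t => ?_, fun k ts _ s => ?_, fun k s ts ws => ?_⟩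
  · simpa [hμ.2.1] using hnow 0 fun _ => True
  · rw [markov_succ_eq, ← sum_filter_forall_fst_eq]
    exact sum_filter_coupledChain_fst hp1 hμ hP w
  · rw [markov_succ_eq, ← sum_filter_forall_snd_eq]
    simpa [Fin.le_last, hμ.2.2.2, (hm _).ne'] using hpast (Fin.last N) w fun _ => True
  · simpa [filter_eq'] using hnow k (· = (s, t))
  · have hden := hpast k ts fun _ => True
    simp only [and_true, filter_true] at hden
    rw [hpast k ts (·.1 = s), hden]
    simp [filter_eq', hμ.2.2.2, (hm _).ne']
  · have hR := hfuture k s ws fun _ _ => True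
    simp only [implies_true, true_and, and_true] at hR
    rw [hfuture k s ws (fun i x => x.2 = ts i), hR]
    ring

theorem stmt8 {S : Type*} [Fintype S] [DecidableEq S] [Nonempty S]
    (p : S → S → ℝ) (hp0 : ∀ s s', 0 ≤ p s s') (hp1 : ∀ s, ∑ s', p s s' = 1)
    (m : S → ℝ) (hm : ∀ s, 0 < m s) (hm1 : ∑ s, m s = 1)
    (hstat : ∀ s', ∑ s, m s * p s s' = m s')
    (μ : S × S → ℝ) (hμ : IsCopula m μ)
    (hP : ∀ s' t : S, ∑ s, μ (s, t) / m t * p s s' = ∑ t', μ (s', t') / m t' * p t t')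
    (n : ℕ) (hn : 1 ≤ n) :
    ∃ ν : (Fin n → S × S) → ℝ,
      (∀ v, 0 ≤ ν v) ∧ (∑ v, ν v = 1) ∧
      -- P2 : the sequence of fictitious states has the same law as the sequence of true
      -- states, and both laws are the `n`-step Markov chain law.
      (∀ w : Fin n → S,
        (∑ v : Fin n → S, ν (fun i => (w i, v i)) = markov p m n hn w) ∧
        (∑ v : Fin n → S, ν (fun i => (v i, w i)) = markov p m n hn w)) ∧
      -- P3 : the law of the pair `(s_k, t_k)` is `μ`.
      (∀ k : Fin n, ∀ s t : S,
        ∑ v ∈ Finset.univ.filter (fun v : Fin n → S × S => v k = (s, t)), ν v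
          = μ (s, t)) ∧
      -- P4 : the conditional law of `s_k` given `(t₁,…,t_k)` is `μ(· | t_k)`.
      (∀ k : Fin n, ∀ ts : Fin n → S,
        0 < (∑ v ∈ Finset.univ.filter
              (fun v : Fin n → S × S => ∀ i ≤ k, (v i).2 = ts i), ν v) →
        ∀ s : S,
          (∑ v ∈ Finset.univ.filter
              (fun v : Fin n → S × S => (∀ i ≤ k, (v i).2 = ts i) ∧ (v k).1 = s), ν v)
            = μ (s, ts k) / m (ts k) *
              ∑ v ∈ Finset.univ.filter
                (fun v : Fin n → S × S => ∀ i ≤ k, (v i).2 = ts i), ν v) ∧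
      -- P1 : conditionally on `s_k`, the vector `(t₁,…,t_k)` is independent of the
      -- future states `(s_{k+1},…,sₙ)`.
      (∀ k : Fin n, ∀ s : S, ∀ ts ws : Fin n → S,
        (∑ v ∈ Finset.univ.filter (fun v : Fin n → S × S =>
            (v k).1 = s ∧ (∀ i ≤ k, (v i).2 = ts i) ∧ ∀ j, k < j → (v j).1 = ws j), ν v) *
        (∑ v ∈ Finset.univ.filter (fun v : Fin n → S × S => (v k).1 = s), ν v) =
        (∑ v ∈ Finset.univ.filter (fun v : Fin n → S × S =>
            (v k).1 = s ∧ ∀ i ≤ k, (v i).2 = ts i), ν v) *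
        (∑ v ∈ Finset.univ.filter (fun v : Fin n → S × S =>
            (v k).1 = s ∧ ∀ j, k < j → (v j).1 = ws j), ν v)) :=
  stmt8_general p hp0 hp1 m hm hstat μ hμ hP n hn
end

section
/- Let y be a non-constant stationary strategy with U²(μ₀,y) ≥ v², where v² = max_{b∈B} Σ_{s∈S} m(s)·u²(s,b). Then for every ε̄ > 0 there exists a payoff function ũ²: S×B → R with ‖ũ² − u²‖ < ε̄ such that Ũ²(μ₀,y) > ṽ², where Ũ² and ṽ² are defined from ũ² in the same way as U² and v² are defined from u². -/
/-!
The payoffs `U²(μ₀, ·)` and `u ↦ Σ_s m(s) u(s,b)` are linear in the payoff function, so it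
suffices to find a direction `d` in which `U²` grows strictly faster than every babbling payoff;
then `u² + δ d` works for small `δ > 0`. Such a direction is `d(s,b) = y(b|s) - ȳ(b)`, where
`ȳ(b) = Σ_s m(s) y(b|s)`: it does not change any babbling payoff, while it raises `U²` by
`Σ_b Σ_s m(s) (y(b|s) - ȳ(b))²`, a sum of variances that is positive because `y` is non-constant.
-/

open Finset

theorem exists_norm_sub_lt_forall_lt {E ι : Type*} [SeminormedAddCommGroup E] [NormedSpace ℝ E]
    (L : ι → E →ₗ[ℝ] ℝ) (R : E →ₗ[ℝ] ℝ) {u d : E} (hu : ∀ i, L i u ≤ R u)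
    (hd : ∀ i, L i d < R d) {ε : ℝ} (hε : 0 < ε) :
    ∃ u' : E, ‖u' - u‖ < ε ∧ ∀ i, L i u' < R u' := by
  set δ := ε / (‖d‖ + 1)
  have hδ : 0 < δ := by positivity
  refine ⟨u + δ • d, ?_, fun i => ?_⟩
  · calc ‖u + δ • d - u‖ = δ * ‖d‖ := by
          rw [add_sub_cancel_left, norm_smul, Real.norm_of_nonneg hδ.le]
      _ < δ * (‖d‖ + 1) := by gcongr; linarith
      _ = ε := div_mul_cancel₀ ε (by positivity)
  · simp only [map_add, map_smul, smul_eq_mul]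
    nlinarith [hu i, mul_pos hδ (sub_pos.mpr (hd i))]

section WeightedSums

variable {S : Type*} [Fintype S] {m : S → ℝ}

theorem sum_mul_sub_weightedMean (hm1 : ∑ s, m s = 1) (f : S → ℝ) :
    ∑ s, m s * (f s - ∑ t, m t * f t) = 0 := by
  simp only [mul_sub, sum_sub_distrib, ← sum_mul, hm1, one_mul, sub_self]

theorem sum_mul_mul_sub_weightedMean (hm1 : ∑ s, m s = 1) (f : S → ℝ) :
    ∑ s, m s * (f s * (f s - ∑ t, m t * f t)) = ∑ s, m s * (f s - ∑ t, m t * f t) ^ 2 := by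
  set μ := ∑ t, m t * f t
  have hsplit : ∀ s, m s * (f s * (f s - μ)) = m s * (f s - μ) ^ 2 + μ * (m s * (f s - μ)) :=
    fun s => by ring
  rw [sum_congr rfl fun s _ => hsplit s, sum_add_distrib, ← mul_sum,
    sum_mul_sub_weightedMean hm1, mul_zero, add_zero]

theorem sum_mul_sub_sq_pos (hm : ∀ s, 0 < m s) {f : S → ℝ} (hf : ∃ s s', f s ≠ f s') (c : ℝ) :
    0 < ∑ s, m s * (f s - c) ^ 2 := by
  obtain ⟨t, ht⟩ : ∃ t, f t ≠ c := by
    obtain ⟨s, s', hss'⟩ := hf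
    by_contra! h
    exact hss' ((h s).trans (h s').symm)
  exact sum_pos' (fun s _ => by have := hm s; positivity)
    ⟨t, mem_univ t, mul_pos (hm t) (sq_pos_of_ne_zero (sub_ne_zero.mpr ht))⟩

end WeightedSums

section Payoffs

variable {S B : Type*} [Fintype S] (m : S → ℝ) (y : S → B → ℝ)

def payoffOfAction (b : B) : (S × B → ℝ) →ₗ[ℝ] ℝ :=
  ∑ s, m s • LinearMap.proj (s, b)

theorem payoffOfAction_apply (b : B) (u : S × B → ℝ) :
    payoffOfAction m b u = ∑ s, m s * u (s, b) := by
  simp [payoffOfAction]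

def centeredStrategy : S × B → ℝ :=
  fun p => y p.1 p.2 - ∑ s, m s * y s p.2

variable {m y} in
theorem payoffOfAction_centeredStrategy (hm1 : ∑ s, m s = 1) (b : B) :
    payoffOfAction m b (centeredStrategy m y) = 0 := by
  rw [payoffOfAction_apply]
  exact sum_mul_sub_weightedMean hm1 (y · b)

variable [Fintype B]

def payoffOfStrategy : (S × B → ℝ) →ₗ[ℝ] ℝ :=
  ∑ s, m s • ∑ b, y s b • LinearMap.proj (s, b)

theorem payoffOfStrategy_apply (u : S × B → ℝ) :
    payoffOfStrategy m y u = ∑ s, m s * ∑ b, y s b * u (s, b) := by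
  simp [payoffOfStrategy]

variable {m y}

theorem payoffOfStrategy_centeredStrategy_pos (hm : ∀ s, 0 < m s) (hm1 : ∑ s, m s = 1)
    (hnc : ∃ s s' : S, y s ≠ y s') : 0 < payoffOfStrategy m y (centeredStrategy m y) := by
  obtain ⟨b, s, s', hb⟩ : ∃ b, ∃ s s' : S, y s b ≠ y s' b := by
    obtain ⟨s, s', hss'⟩ := hnc
    obtain ⟨b, hb⟩ := Function.ne_iff.mp hss'
    exact ⟨b, s, s', hb⟩
  have hvar : payoffOfStrategy m y (centeredStrategy m y) =
      ∑ b, ∑ s, m s * (y s b - ∑ t, m t * y t b) ^ 2 := by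
    simp only [payoffOfStrategy_apply, centeredStrategy, mul_sum]
    rw [sum_comm]
    exact sum_congr rfl fun b _ => sum_mul_mul_sub_weightedMean hm1 (y · b)
  rw [hvar]
  exact sum_pos' (fun b _ => sum_nonneg fun s _ => by have := hm s; positivity)
    ⟨b, mem_univ b, sum_mul_sub_sq_pos hm ⟨s, s', hb⟩ _⟩

end Payoffs

/- `U²(μ₀,y) = Σ_s m(s) Σ_b y(b|s) u²(s,b)`; the condition `U²(μ₀,y) ≥ v²` (resp. `> v²`),
where `v² = max_b Σ_s m(s)u²(s,b)`, is expressed as the inequality against every `b`. -/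
theorem stmt9_general {S B : Type*} [Fintype S] [Fintype B]
    (m : S → ℝ) (hm : ∀ s, 0 < m s) (hm1 : ∑ s, m s = 1)
    (u2 : S × B → ℝ)
    (y : S → B → ℝ)
    (hnc : ∃ s s' : S, y s ≠ y s')
    (hIR : ∀ b : B, ∑ s, m s * u2 (s, b) ≤ ∑ s, m s * ∑ b', y s b' * u2 (s, b'))
    (ε : ℝ) (hε : 0 < ε) :
    ∃ u2' : S × B → ℝ, ‖u2' - u2‖ < ε ∧
      ∀ b : B, ∑ s, m s * u2' (s, b) < ∑ s, m s * ∑ b', y s b' * u2' (s, b') := by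
  have hdir : ∀ b, payoffOfAction m b (centeredStrategy m y) <
      payoffOfStrategy m y (centeredStrategy m y) := fun b => by
    rw [payoffOfAction_centeredStrategy hm1]
    exact payoffOfStrategy_centeredStrategy_pos hm hm1 hnc
  obtain ⟨u2', hnear, hlt⟩ := exists_norm_sub_lt_forall_lt (payoffOfAction m)
    (payoffOfStrategy m y) (u := u2) (fun b => by
      simpa only [payoffOfAction_apply, payoffOfStrategy_apply] using hIR b) hdir hε
  refine ⟨u2', hnear, fun b => ?_⟩
  simpa only [payoffOfAction_apply, payoffOfStrategy_apply] using hlt b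

theorem stmt9 {S B : Type*} [Fintype S] [Nonempty S] [Fintype B] [Nonempty B]
    (m : S → ℝ) (hm : ∀ s, 0 < m s) (hm1 : ∑ s, m s = 1)
    (u2 : S × B → ℝ)
    (y : S → B → ℝ) (hy : IsStrategy y)
    (hnc : ∃ s s' : S, y s ≠ y s')
    (hIR : ∀ b : B, ∑ s, m s * u2 (s, b) ≤ ∑ s, m s * ∑ b', y s b' * u2 (s, b'))
    (ε : ℝ) (hε : 0 < ε) :
    ∃ u2' : S × B → ℝ, ‖u2' - u2‖ < ε ∧
      ∀ b : B, ∑ s, m s * u2' (s, b) < ∑ s, m s * ∑ b', y s b' * u2' (s, b') :=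
  stmt9_general m hm hm1 u2 y hnc hIR ε hε
end

section
/- Let y be a stationary strategy such that U¹(μ₀,y) ≥ U¹(μ,y) for every μ ∈ M(m). Then for every ε > 0 there exists a stationary strategy ỹ with ‖ỹ − y‖ < ε such that ỹ is one-to-one (ỹ(·|s) ≠ ỹ(·|s') whenever s ≠ s') and U¹(μ₀,ỹ) ≥ U¹(μ,ỹ) for every μ ∈ M(m). -/
/-!
Mixing `y` with the uniform strategy makes it strictly positive without affecting optimality of
`μ₀`, since a strategy that ignores its argument earns the same against every copula.
Adding `τ` times the centred payoff `ũ` keeps `μ₀` optimal: the potentials `f s = τ ‖ũ s‖² / 2`,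
`g a = τ ‖ũ a‖² / 2` are a dual certificate, with slack `τ ‖ũ s - ũ a‖² / 2` at `(s, a)`.
A further perturbation `δ K` with `K` injective and of zero row sums separates all states. Its
cost `δ ⟪K a, ũ s - ũ a⟫` vanishes where the slack does and is absorbed by the slack elsewhere for
small `δ`, and only finitely many `δ` fail to give an injective strategy.
-/

open Filter Topology Set

section Topology

theorem eventually_forall_mul_le {ι : Type*} [Finite ι] {a b : ι → ℝ} (ha : ∀ i, 0 ≤ a i)
    (hb : ∀ i, a i = 0 → b i = 0) : ∀ᶠ δ in 𝓝 (0 : ℝ), ∀ i, δ * b i ≤ a i := by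
  refine eventually_all.2 fun i => ?_
  rcases (ha i).eq_or_lt with hai | hai
  · exact Eventually.of_forall fun δ => by simp [hb i hai.symm, ← hai]
  · have : Tendsto (fun δ : ℝ => δ * b i) (𝓝 0) (𝓝 0) := by
      simpa using (continuous_mul_const (b i)).tendsto 0
    exact (this.eventually (gt_mem_nhds hai)).mono fun _ => le_of_lt

theorem eventually_injective_add_smul {𝕜 S V : Type*} [Field 𝕜] [TopologicalSpace 𝕜] [T1Space 𝕜]
    [Finite S] [AddCommGroup V] [Module 𝕜 V] (w K : S → V) (hK : Function.Injective K) :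
    ∀ᶠ δ in 𝓝[≠] (0 : 𝕜), Function.Injective (w + δ • K) := by
  let bad : S × S → Set 𝕜 := fun p => {δ | p.1 ≠ p.2 ∧ (w + δ • K) p.1 = (w + δ • K) p.2}
  have hbad : ∀ p, (bad p).Subsingleton := by
    rintro ⟨x, x'⟩ δ ⟨hne, hδ⟩ δ' ⟨-, hδ'⟩
    have : (δ - δ') • (K x - K x') = 0 := by
      simp only [Pi.add_apply, Pi.smul_apply] at hδ hδ'
      rw [sub_smul, smul_sub, smul_sub]
      linear_combination (norm := module) hδ - hδ'
    rcases smul_eq_zero.1 this with h | h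
    · exact sub_eq_zero.1 h
    · exact absurd (hK (sub_eq_zero.1 h)) hne
  filter_upwards [nhdsNE_of_nhdsNE_sdiff_finite univ_mem
    (Set.finite_iUnion fun p => (hbad p).finite)] with δ hδ x x' hxx'
  by_contra hne
  exact hδ.2 (Set.mem_iUnion.2 ⟨(x, x'), hne, hxx'⟩)

theorem isOpen_setOf_forall_pos {ι κ : Type*} [Finite ι] [Finite κ] :
    IsOpen {v : ι → κ → ℝ | ∀ i j, 0 < v i j} := by
  simp only [ofPred_forall]
  exact isOpen_iInter_of_finite fun i => isOpen_iInter_of_finite fun j =>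
    isOpen_lt continuous_const ((continuous_apply j).comp (continuous_apply i))

end Topology

section Payoff

variable {S B : Type*} [Fintype B]

noncomputable def centeredPayoff (u : S × B → ℝ) : S → B → ℝ :=
  fun s b => u (s, b) - (∑ b', u (s, b')) / Fintype.card B

theorem sum_centeredPayoff [Nonempty B] (u : S × B → ℝ) (s : S) :
    ∑ b, centeredPayoff u s b = 0 := by
  have hB : (Fintype.card B : ℝ) ≠ 0 := by positivity
  simp [centeredPayoff, Finset.sum_sub_distrib, mul_div_cancel₀ _ hB]

theorem sum_mul_eq_dotProduct_centeredPayoff {v : B → ℝ} (hv : ∑ b, v b = 0)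
    (u : S × B → ℝ) (s : S) : ∑ b, v b * u (s, b) = v ⬝ᵥ centeredPayoff u s := by
  simp [centeredPayoff, dotProduct, mul_sub, Finset.sum_sub_distrib, ← Finset.sum_mul, hv]

variable [Fintype S]

theorem upay_add (u : S × B → ℝ) (μ : S × S → ℝ) (y z : S → B → ℝ) :
    Upay u μ (y + z) = Upay u μ y + Upay u μ z := by
  simp only [Upay, Pi.add_apply, add_mul, Finset.sum_add_distrib, mul_add]

theorem upay_smul (u : S × B → ℝ) (μ : S × S → ℝ) (c : ℝ) (y : S → B → ℝ) :
    Upay u μ (c • y) = c * Upay u μ y := by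
  simp only [Upay, Pi.smul_apply, smul_eq_mul, mul_assoc, ← Finset.mul_sum, mul_left_comm _ c]

theorem IsCopula.sum_mul_left {m : S → ℝ} {μ : S × S → ℝ} (hμ : IsCopula m μ) (f : S → ℝ) :
    ∑ s, ∑ a, μ (s, a) * f s = ∑ s, m s * f s := by
  simp only [← Finset.sum_mul, hμ.2.2.1]

theorem IsCopula.sum_mul_right {m : S → ℝ} {μ : S × S → ℝ} (hμ : IsCopula m μ) (f : S → ℝ) :
    ∑ s, ∑ a, μ (s, a) * f a = ∑ a, m a * f a := by
  rw [Finset.sum_comm]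
  simp only [← Finset.sum_mul, hμ.2.2.2]

theorem sum_mu0_mul [DecidableEq S] (m : S → ℝ) (F : S → S → ℝ) :
    ∑ s, ∑ a, mu0 m (s, a) * F s a = ∑ s, m s * F s s := by
  simp [mu0, ite_mul]

def IsDiagonalOptimal [DecidableEq S] (m : S → ℝ) (u : S × B → ℝ) (z : S → B → ℝ) : Prop :=
  ∀ μ, IsCopula m μ → Upay u μ z ≤ Upay u (mu0 m) z

namespace IsDiagonalOptimal

variable [DecidableEq S] {m : S → ℝ} {u : S × B → ℝ} {y z : S → B → ℝ}

theorem add (hy : IsDiagonalOptimal m u y) (hz : IsDiagonalOptimal m u z) :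
    IsDiagonalOptimal m u (y + z) := fun μ hμ => by
  simpa only [upay_add] using add_le_add (hy μ hμ) (hz μ hμ)

theorem smul (hy : IsDiagonalOptimal m u y) {c : ℝ} (hc : 0 ≤ c) :
    IsDiagonalOptimal m u (c • y) := fun μ hμ => by
  simpa only [upay_smul] using mul_le_mul_of_nonneg_left (hy μ hμ) hc

end IsDiagonalOptimal

theorem isDiagonalOptimal_const [DecidableEq S] (m : S → ℝ) (u : S × B → ℝ) (c : B → ℝ) :
    IsDiagonalOptimal m u (fun _ => c) := fun _ hμ =>
  ((hμ.sum_mul_left _).trans (sum_mu0_mul m fun s _ => ∑ b, c b * u (s, b)).symm).le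

theorem isDiagonalOptimal_of_potentials [DecidableEq S] {m : S → ℝ} {u : S × B → ℝ}
    {z : S → B → ℝ} (f g : S → ℝ) (hle : ∀ s a, ∑ b, z a b * u (s, b) ≤ f s + g a)
    (hdiag : ∀ s, ∑ b, z s b * u (s, b) = f s + g s) : IsDiagonalOptimal m u z := by
  intro μ hμ
  calc Upay u μ z ≤ ∑ s, ∑ a, μ (s, a) * (f s + g a) :=
        Finset.sum_le_sum fun s _ => Finset.sum_le_sum fun a _ =>
          mul_le_mul_of_nonneg_left (hle s a) (hμ.1 _)
    _ = ∑ s, m s * (f s + g s) := by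
        simp only [mul_add, Finset.sum_add_distrib, hμ.sum_mul_left, hμ.sum_mul_right]
    _ = Upay u (mu0 m) z := by
        simp only [Upay, sum_mu0_mul, hdiag]

theorem eventually_isDiagonalOptimal_smul_centeredPayoff_add [DecidableEq S] [Nonempty B]
    (m : S → ℝ) (u : S × B → ℝ) {τ : ℝ} (hτ : 0 < τ) {K : S → B → ℝ} (hK : ∀ x, ∑ b, K x b = 0) :
    ∀ᶠ δ in 𝓝 (0 : ℝ), IsDiagonalOptimal m u (τ • centeredPayoff u + δ • K) := by
  set v := centeredPayoff u
  have hsmall : ∀ᶠ δ in 𝓝 (0 : ℝ), ∀ p : S × S,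
      δ * (K p.2 ⬝ᵥ (v p.1 - v p.2)) ≤ τ / 2 * ((v p.1 - v p.2) ⬝ᵥ (v p.1 - v p.2)) := by
    refine eventually_forall_mul_le (fun p => ?_) fun p hp => ?_
    · exact mul_nonneg (by positivity) (Fintype.sum_nonneg fun _ => mul_self_nonneg _)
    · rw [(mul_eq_zero.1 hp).resolve_left (by positivity) |> dotProduct_self_eq_zero.1,
        dotProduct_zero]
  filter_upwards [hsmall] with δ hδ
  have hrow : ∀ s a, ∑ b, (τ • v + δ • K) a b * u (s, b) = (τ • v a + δ • K a) ⬝ᵥ v s := by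
    intro s a
    refine sum_mul_eq_dotProduct_centeredPayoff ?_ u s
    simp [Finset.sum_add_distrib, ← Finset.mul_sum, v, sum_centeredPayoff, hK]
  refine isDiagonalOptimal_of_potentials (fun s => τ / 2 * (v s ⬝ᵥ v s))
    (fun a => τ / 2 * (v a ⬝ᵥ v a) + δ * (K a ⬝ᵥ v a)) (fun s a => ?_) fun s => ?_
  · have := hδ (s, a)
    simp only [hrow, add_dotProduct, smul_dotProduct, dotProduct_sub, sub_dotProduct,
      smul_eq_mul, dotProduct_comm (v s) (v a)] at this ⊢
    linarith
  · simp only [hrow, add_dotProduct, smul_dotProduct, smul_eq_mul]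
    ring

end Payoff

theorem exists_injective_forall_sum_eq_zero (S B : Type*) [Fintype S] [Fintype B]
    [Nontrivial B] :
    ∃ K : S → B → ℝ, Function.Injective K ∧ ∀ x, ∑ b, K x b = 0 := by
  classical
  obtain ⟨b₁, b₂, hb⟩ := exists_pair_ne B
  let ζ : B → ℝ := Pi.single b₁ 1 - Pi.single b₂ 1
  have hζ : ζ ≠ 0 := fun h => by simpa [ζ, hb] using congrFun h b₁
  have hk : Function.Injective fun x : S => ((Fintype.equivFin S x : ℕ) : ℝ) :=
    Nat.cast_injective.comp (Fin.val_injective.comp (Fintype.equivFin S).injective)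
  refine ⟨fun x => ((Fintype.equivFin S x : ℕ) : ℝ) • ζ, (smul_left_injective ℝ hζ).comp hk,
    fun x => ?_⟩
  simp [ζ, ← Finset.mul_sum, Finset.sum_sub_distrib]

theorem exists_mem_Ioo_forall_pos_norm_sub_lt {ι κ : Type*} [Fintype ι] [Fintype κ]
    {y p : ι → κ → ℝ} (hy : ∀ i j, 0 ≤ y i j) (hp : ∀ i j, 0 < p i j) (v : ι → κ → ℝ)
    {ε : ℝ} (hε : 0 < ε) :
    ∃ t ∈ Ioo (0 : ℝ) 1, (∀ i j, 0 < ((1 - t) • y + t • (p + t • v)) i j) ∧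
      ‖(1 - t) • y + t • (p + t • v) - y‖ < ε := by
  have hpos : ∀ᶠ t in 𝓝 (0 : ℝ), p + t • v ∈ {w | ∀ i j, 0 < w i j} :=
    (Continuous.tendsto' (by fun_prop) 0 p (by simp)).eventually
      (isOpen_setOf_forall_pos.mem_nhds hp)
  have hnear : ∀ᶠ t in 𝓝 (0 : ℝ), (1 - t) • y + t • (p + t • v) ∈ Metric.ball y ε :=
    (Continuous.tendsto' (by fun_prop) 0 y (by simp)).eventually (Metric.ball_mem_nhds y hε)
  obtain ⟨t, ⟨hpt, hnt⟩, ht⟩ :=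
    (((hpos.and hnear).filter_mono nhdsWithin_le_nhds).and (Ioo_mem_nhdsGT one_pos)).exists
  refine ⟨t, ht, fun i j => ?_, mem_ball_iff_norm.1 hnt⟩
  have := hpt i j
  simp only [Pi.add_apply, Pi.smul_apply, smul_eq_mul] at this ⊢
  exact add_pos_of_nonneg_of_pos (mul_nonneg (by linarith [ht.2]) (hy i j)) (mul_pos ht.1 this)

theorem stmt10_general {S B : Type*} [Fintype S] [DecidableEq S]
    [Fintype B] [Nontrivial B]
    (m : S → ℝ)
    (u1 : S × B → ℝ)
    (y : S → B → ℝ) (hy : IsStrategy y)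
    (hC1 : ∀ μ : S × S → ℝ, IsCopula m μ → Upay u1 μ y ≤ Upay u1 (mu0 m) y)
    (ε : ℝ) (hε : 0 < ε) :
    ∃ y' : S → B → ℝ, IsStrategy y' ∧ ‖y' - y‖ < ε ∧ Function.Injective y' ∧
      ∀ μ : S × S → ℝ, IsCopula m μ → Upay u1 μ y' ≤ Upay u1 (mu0 m) y' := by
  obtain ⟨K, hK, hK0⟩ := exists_injective_forall_sum_eq_zero S B
  set v := centeredPayoff u1
  set c : B → ℝ := fun _ => (Fintype.card B : ℝ)⁻¹
  obtain ⟨t, ⟨ht0, ht1⟩, hwpos, hwε⟩ :=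
    exists_mem_Ioo_forall_pos_norm_sub_lt hy.1 (p := fun _ => c) (fun _ _ => by positivity) v hε
  set w := (1 - t) • y + t • ((fun _ => c) + t • v)
  have hw : Tendsto (fun δ : ℝ => w + δ • K) (𝓝 0) (𝓝 w) :=
    Continuous.tendsto' (by fun_prop) 0 w (by simp)
  have hopt := eventually_isDiagonalOptimal_smul_centeredPayoff_add m u1 (pow_pos ht0 2) hK0
  have hpos := hw.eventually (isOpen_setOf_forall_pos.mem_nhds hwpos)
  have hnear := hw.eventually (Metric.isOpen_ball.mem_nhds (mem_ball_iff_norm.2 hwε))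
  obtain ⟨δ, ⟨⟨hδopt, hδpos⟩, hδnear⟩, hδinj⟩ :=
    ((((hopt.and hpos).and hnear).filter_mono nhdsWithin_le_nhds).and
      (eventually_injective_add_smul w K hK)).exists
  refine ⟨w + δ • K, ⟨fun x b => (hδpos x b).le, fun x => ?_⟩, mem_ball_iff_norm.1 hδnear,
    hδinj, ?_⟩
  · simp only [w, c, v, smul_add, Pi.add_apply, Pi.smul_apply, smul_eq_mul,
      Finset.sum_add_distrib, ← Finset.mul_sum, hy.2, hK0, sum_centeredPayoff, Finset.sum_const,
      Finset.card_univ, nsmul_eq_mul, mul_one, mul_zero, add_zero]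
    field_simp
    ring
  · have : w + δ • K = (1 - t) • y + t • (fun _ => c) + (t ^ 2 • v + δ • K) := by
      simp only [w]
      module
    rw [this]
    exact ((IsDiagonalOptimal.smul hC1 (by linarith)).add
      ((isDiagonalOptimal_const m u1 c).smul ht0.le)).add hδopt

theorem stmt10 {S B : Type*} [Fintype S] [DecidableEq S] [Nonempty S]
    [Fintype B] [Nontrivial B]
    (m : S → ℝ) (hm : ∀ s, 0 < m s) (hm1 : ∑ s, m s = 1)
    (u1 : S × B → ℝ)
    (y : S → B → ℝ) (hy : IsStrategy y)
    (hC1 : ∀ μ : S × S → ℝ, IsCopula m μ → Upay u1 μ y ≤ Upay u1 (mu0 m) y)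
    (ε : ℝ) (hε : 0 < ε) :
    ∃ y' : S → B → ℝ, IsStrategy y' ∧ ‖y' - y‖ < ε ∧ Function.Injective y' ∧
      ∀ μ : S × S → ℝ, IsCopula m μ → Upay u1 μ y' ≤ Upay u1 (mu0 m) y' :=
  stmt10_general m u1 y hy hC1 ε hε
end

section
/- Suppose condition B holds for the game G = (u¹,u²): there exists a non-constant stationary strategy y with U²(μ₀,y) ≥ v² and U¹(μ₀,y) ≥ U¹(μ,y) for every μ ∈ M(m). Then for every ε > 0 there exists a game G' = (ũ¹,ũ²) with ‖ũ¹ − u¹‖ < ε and ‖ũ² − u²‖ < ε, and a stationary strategy ỹ, such that Ũ²(μ₀,ỹ) > ṽ² and Ũ¹(μ₀,ỹ) > Ũ¹(μ,ỹ) for every μ ∈ M(m) with μ ≠ μ₀ (i.e., the set Ê(M) of the game G' is non-empty), where Ũ¹, Ũ², ṽ² are defined from ũ¹, ũ² as U¹, U², v² are from u¹, u². -/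
open Finset Filter Topology Function

section

variable {n R : Type*} [Fintype n] [Ring R] [LinearOrder R] [IsStrictOrderedRing R]

lemma dotProduct_self_nonneg (v : n → R) : 0 ≤ v ⬝ᵥ v :=
  sum_nonneg fun _ _ => mul_self_nonneg _

lemma dotProduct_self_pos {v : n → R} (hv : v ≠ 0) : 0 < v ⬝ᵥ v :=
  (dotProduct_self_nonneg v).lt_of_ne' (dotProduct_self_eq_zero.not.2 hv)

end

lemma eventually_nonneg_add_mul {a c : ℝ} (ha : 0 ≤ a) (hc : a = 0 → c = 0) :
    ∀ᶠ κ in 𝓝 (0 : ℝ), 0 ≤ a + κ * c := by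
  rcases ha.eq_or_lt with rfl | ha
  · simp [hc rfl]
  · have : Tendsto (fun κ : ℝ => a + κ * c) (𝓝 0) (𝓝 a) :=
      (by fun_prop : Continuous fun κ : ℝ => a + κ * c).tendsto' 0 a (by simp)
    exact (this.eventually_const_lt ha).mono fun _ h => h.le

lemma exists_pos_of_eventually_nhdsGT {p : ℝ → Prop} (h : ∀ᶠ x in 𝓝[>] 0, p x) :
    ∃ x > 0, p x :=
  let ⟨x, hx, hx₀⟩ := (h.and (self_mem_nhdsWithin : Set.Ioi (0 : ℝ) ∈ 𝓝[>] 0)).exists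
  ⟨x, hx₀, hx⟩

lemma eventually_add_smul_ne_zero {E : Type*} [AddCommGroup E] [Module ℝ E] [TopologicalSpace E]
    [ContinuousAdd E] [ContinuousSMul ℝ E] [T1Space E] (x : E) {z : E} (hz : z ≠ 0) :
    ∀ᶠ κ in 𝓝[>] (0 : ℝ), x + κ • z ≠ 0 := by
  rcases eq_or_ne x 0 with rfl | hx
  · filter_upwards [self_mem_nhdsWithin] with κ hκ
    simpa using smul_ne_zero (ne_of_gt (show (0 : ℝ) < κ from hκ)) hz
  · have : Tendsto (fun κ : ℝ => x + κ • z) (𝓝 0) (𝓝 x) :=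
      (by fun_prop : Continuous fun κ : ℝ => x + κ • z).tendsto' 0 x (by simp)
    exact nhdsWithin_le_nhds (this.eventually_ne hx)

lemma eventually_norm_smul_lt {E : Type*} [SeminormedAddCommGroup E] [NormedSpace ℝ E] (x : E)
    {ε : ℝ} (hε : 0 < ε) : ∀ᶠ δ in 𝓝 (0 : ℝ), ‖δ • x‖ < ε := by
  have : Tendsto (fun δ : ℝ => ‖δ • x‖) (𝓝 0) (𝓝 0) :=
    (by fun_prop : Continuous fun δ : ℝ => ‖δ • x‖).tendsto' 0 0 (by simp)
  exact this.eventually_lt_const hε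

section

variable {S B : Type*} [Fintype S] [Fintype B]

def diagGap (μ : S × S → ℝ) (y v : S → B → ℝ) : ℝ :=
  ∑ s, ∑ a, μ (s, a) * ((y s - y a) ⬝ᵥ v s)

lemma diagGap_add_left (μ : S × S → ℝ) (y y' v : S → B → ℝ) :
    diagGap μ (y + y') v = diagGap μ y v + diagGap μ y' v := by
  simp only [diagGap, ← sum_add_distrib, ← mul_add]
  congr! 3 with s _ a _
  simp only [Pi.add_apply, ← add_dotProduct]
  abel_nf

lemma diagGap_smul_left (μ : S × S → ℝ) (c : ℝ) (y v : S → B → ℝ) :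
    diagGap μ (c • y) v = c * diagGap μ y v := by
  simp only [diagGap, mul_sum, Pi.smul_apply, ← smul_sub, smul_dotProduct, smul_eq_mul]
  congr! 2
  ring

lemma diagGap_const_left (μ : S × S → ℝ) (p : B → ℝ) (v : S → B → ℝ) :
    diagGap μ (fun _ => p) v = 0 := by
  simp [diagGap]

lemma diagGap_add_right (μ : S × S → ℝ) (y v v' : S → B → ℝ) :
    diagGap μ y (v + v') = diagGap μ y v + diagGap μ y v' := by
  simp only [diagGap, ← sum_add_distrib, ← mul_add, Pi.add_apply, dotProduct_add]

lemma diagGap_smul_right (μ : S × S → ℝ) (c : ℝ) (y v : S → B → ℝ) :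
    diagGap μ y (c • v) = c * diagGap μ y v := by
  simp only [diagGap, mul_sum, Pi.smul_apply, dotProduct_smul, smul_eq_mul]
  congr! 2
  ring

lemma sum_sum_mul_sub_eq_zero {m : S → ℝ} {μ : S × S → ℝ} (h₁ : ∀ s, ∑ a, μ (s, a) = m s)
    (h₂ : ∀ a, ∑ s, μ (s, a) = m a) (f : S → ℝ) :
    ∑ s, ∑ a, μ (s, a) * (f s - f a) = 0 := by
  simp only [mul_sub, sum_sub_distrib, ← sum_mul, h₁]
  rw [sum_comm]
  simp only [← sum_mul, h₂, sub_self]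

lemma diagGap_self {m : S → ℝ} {μ : S × S → ℝ} (h₁ : ∀ s, ∑ a, μ (s, a) = m s)
    (h₂ : ∀ a, ∑ s, μ (s, a) = m a) (v : S → B → ℝ) :
    diagGap μ v v = (∑ s, ∑ a, μ (s, a) * ((v s - v a) ⬝ᵥ (v s - v a))) / 2 := by
  have polarize : ∀ s a, μ (s, a) * ((v s - v a) ⬝ᵥ (v s - v a)) =
      2 * (μ (s, a) * ((v s - v a) ⬝ᵥ v s)) - μ (s, a) * (v s ⬝ᵥ v s - v a ⬝ᵥ v a) := by
    intro s a
    simp only [sub_dotProduct, dotProduct_sub, dotProduct_comm (v a) (v s)]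
    ring
  simp only [polarize, sum_sub_distrib, ← mul_sum, sum_sum_mul_sub_eq_zero h₁ h₂, diagGap]
  ring

lemma Upay_add_smul (u w : S × B → ℝ) (c : ℝ) (μ : S × S → ℝ) (y : S → B → ℝ) :
    Upay (u + c • w) μ y = Upay u μ y + c * Upay w μ y := by
  simp only [Upay, Pi.add_apply, Pi.smul_apply, smul_eq_mul, mul_sum, ← sum_add_distrib]
  congr! 3
  ring

lemma Upay_mix (u : S × B → ℝ) (μ : S × S → ℝ) (y r : S → B → ℝ) (t : ℝ) :
    Upay u μ ((1 - t) • y + t • r) = (1 - t) * Upay u μ y + t * Upay u μ r := by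
  simp only [Upay, Pi.add_apply, Pi.smul_apply, smul_eq_mul, mul_sum, ← sum_add_distrib]
  congr! 3
  ring

variable [DecidableEq S]

lemma Upay_mu0 (m : S → ℝ) (u : S × B → ℝ) (y : S → B → ℝ) :
    Upay u (mu0 m) y = ∑ s, m s * (y s ⬝ᵥ curry u s) := by
  refine sum_congr rfl fun s _ => ?_
  rw [sum_eq_single s (fun a _ has => by simp [mu0, Ne.symm has]) (by simp)]
  simp [mu0, dotProduct]

lemma Upay_mu0_sub_Upay {m : S → ℝ} {μ : S × S → ℝ} (h₁ : ∀ s, ∑ a, μ (s, a) = m s)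
    (u : S × B → ℝ) (y : S → B → ℝ) :
    Upay u (mu0 m) y - Upay u μ y = diagGap μ y (curry u) := by
  rw [Upay_mu0]
  simp only [← h₁, sum_mul, diagGap, Upay, ← sum_sub_distrib, sub_dotProduct, mul_sub]
  rfl

lemma IsCopula.exists_pos_of_ne_mu0 {m : S → ℝ} {μ : S × S → ℝ} (hμ : IsCopula m μ)
    (hne : μ ≠ mu0 m) : ∃ s a, s ≠ a ∧ 0 < μ (s, a) := by
  by_contra! hoff
  have hzero : ∀ s a, s ≠ a → μ (s, a) = 0 := fun s a h => (hoff s a h).antisymm (hμ.1 _)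
  refine hne (funext fun ⟨s, a⟩ => ?_)
  rcases eq_or_ne s a with rfl | hsa
  · simp only [mu0, if_true]
    rw [← hμ.2.2.1 s, sum_eq_single s (fun a _ h => hzero s a h.symm) (by simp)]
  · simp [mu0, hsa, hzero s a hsa]

lemma diagGap_self_pos {m : S → ℝ} {μ : S × S → ℝ} (hμ : IsCopula m μ) (hne : μ ≠ mu0 m)
    {v : S → B → ℝ} (hv : Injective v) : 0 < diagGap μ v v := by
  obtain ⟨s, a, hsa, hpos⟩ := hμ.exists_pos_of_ne_mu0 hne
  have hterm : ∀ s a, 0 ≤ μ (s, a) * ((v s - v a) ⬝ᵥ (v s - v a)) :=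
    fun s a => mul_nonneg (hμ.1 _) (dotProduct_self_nonneg _)
  rw [diagGap_self hμ.2.2.1 hμ.2.2.2]
  refine half_pos (sum_pos' (fun s _ => sum_nonneg fun a _ => hterm s a) ⟨s, mem_univ s, ?_⟩)
  refine sum_pos' (fun a _ => hterm s a) ⟨a, mem_univ a, mul_pos hpos ?_⟩
  exact dotProduct_self_pos (sub_ne_zero.2 (hv.ne hsa))

end

section

variable {S B : Type*} [Fintype B]

lemma IsStrategy.mix {y r : S → B → ℝ} (hy : IsStrategy y) (hr : IsStrategy r) {t : ℝ}
    (ht₀ : 0 ≤ t) (ht₁ : t ≤ 1) : IsStrategy ((1 - t) • y + t • r) := by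
  refine ⟨fun a b => ?_, fun a => ?_⟩
  · simp only [Pi.add_apply, Pi.smul_apply, smul_eq_mul]
    have hya := hy.1 a b
    have hra := hr.1 a b
    positivity
  · simp only [Pi.add_apply, Pi.smul_apply, smul_eq_mul, sum_add_distrib, ← mul_sum, hy.2, hr.2]
    ring

lemma IsStrategy.nontrivial {y : S → B → ℝ} (hy : IsStrategy y) {s s' : S} (hne : y s ≠ y s') :
    Nontrivial B := by
  by_contra! hB
  refine hne (funext fun b => ?_)
  rw [← Fintype.sum_subsingleton (y s) b, ← Fintype.sum_subsingleton (y s') b, hy.2, hy.2]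

variable (B) in
noncomputable def centering : (B → ℝ) →ₗ[ℝ] B → ℝ where
  toFun x := x - fun _ => (∑ b, x b) / Fintype.card B
  map_add' x x' := by
    ext b
    simp only [Pi.add_apply, Pi.sub_apply, sum_add_distrib, add_div]
    ring
  map_smul' c x := by
    ext b
    simp only [Pi.smul_apply, Pi.sub_apply, smul_eq_mul, ← mul_sum, mul_div_assoc, RingHom.id_apply]
    ring

lemma centering_apply (x : B → ℝ) (b : B) :
    centering B x b = x b - (∑ b', x b') / Fintype.card B := rfl

lemma sum_centering [Nonempty B] (x : B → ℝ) : ∑ b, centering B x b = 0 := by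
  simp only [centering_apply, sum_sub_distrib, sum_const, card_univ, nsmul_eq_mul]
  field_simp
  ring

lemma centering_dotProduct [Nonempty B] (x z : B → ℝ) :
    centering B x ⬝ᵥ z = centering B x ⬝ᵥ centering B z := by
  have : centering B z = z - fun _ => (∑ b, z b) / Fintype.card B := rfl
  rw [this, dotProduct_sub]
  simp [dotProduct, ← sum_mul, sum_centering]

lemma centering_ne_zero_of_ne {x : B → ℝ} {b b' : B} (h : x b ≠ x b') : centering B x ≠ 0 := by
  intro h0
  have := congrFun h0 b
  have := congrFun h0 b'
  simp only [centering_apply, Pi.zero_apply] at *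
  exact h (by linarith)

end

section

variable {S B : Type*} [Fintype S] [Fintype B]

noncomputable def alignedStrategy (γ : ℝ) (v : S → B → ℝ) : S → B → ℝ :=
  fun s => (fun _ => (Fintype.card B : ℝ)⁻¹) + γ • centering B (v s)

lemma diagGap_alignedStrategy [Nonempty B] (μ : S × S → ℝ) (γ : ℝ) (v : S → B → ℝ) :
    diagGap μ (alignedStrategy γ v) v = γ * diagGap μ (centering B ∘ v) (centering B ∘ v) := by
  have hsplit : alignedStrategy γ v = (fun _ _ => (Fintype.card B : ℝ)⁻¹) + γ • (centering B ∘ v) :=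
    rfl
  rw [hsplit, diagGap_add_left, diagGap_const_left, diagGap_smul_left, zero_add]
  congr 1
  refine sum_congr rfl fun s _ => sum_congr rfl fun a _ => ?_
  rw [comp_apply, comp_apply, ← map_sub, centering_dotProduct]

lemma exists_isStrategy_alignedStrategy [Nonempty B] (v : S → B → ℝ) :
    ∃ γ > 0, IsStrategy (alignedStrategy γ v) := by
  have hn : (0 : ℝ) < (Fintype.card B : ℝ)⁻¹ := by positivity
  have hnonneg : ∀ᶠ γ in 𝓝 (0 : ℝ), ∀ s b, 0 ≤ alignedStrategy γ v s b :=
    eventually_all.2 fun s => eventually_all.2 fun b =>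
      eventually_nonneg_add_mul hn.le fun h => absurd h hn.ne'
  obtain ⟨γ, hγ₀, hγ⟩ := exists_pos_of_eventually_nhdsGT (nhdsWithin_le_nhds hnonneg)
  refine ⟨γ, hγ₀, hγ, fun s => ?_⟩
  simp only [alignedStrategy, Pi.add_apply, Pi.smul_apply, smul_eq_mul, sum_add_distrib, ← mul_sum,
    sum_centering, sum_const, card_univ, nsmul_eq_mul]
  field_simp
  ring

lemma eventually_injective_centering_add_smul (v : S → B → ℝ) {P : S → B → ℝ}
    (hP : Injective (centering B ∘ P)) :
    ∀ᶠ δ in 𝓝[>] (0 : ℝ), Injective (centering B ∘ (v + δ • P)) := by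
  have hpair : ∀ s a, ∀ᶠ δ in 𝓝[>] (0 : ℝ), s ≠ a →
      centering B (v s - v a) + δ • centering B (P s - P a) ≠ 0 := fun s a =>
    eventually_imp_distrib_left.2 fun hsa =>
      eventually_add_smul_ne_zero _ (by simpa [sub_eq_zero] using hP.ne hsa)
  filter_upwards [eventually_all.2 fun s => eventually_all.2 (hpair s)] with δ hδ
  intro s a hsa
  by_contra hne
  apply hδ s a hne
  simp only [map_sub, map_add, map_smul, Pi.add_apply, Pi.smul_apply, comp_apply] at hsa ⊢
  rw [smul_sub, sub_add_sub_comm, hsa, sub_self]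

lemma exists_diagGap_nonneg_injective_centering [Nontrivial B] (m : S → ℝ) (y : S → B → ℝ) :
    ∃ P : S → B → ℝ, (∀ μ, IsCopula m μ → 0 ≤ diagGap μ y P) ∧ Injective (centering B ∘ P) := by
  classical
  obtain ⟨b₀, b₁, hb⟩ := exists_pair_ne B
  have he : centering B (Pi.single b₀ 1) ≠ 0 :=
    centering_ne_zero_of_ne (b := b₀) (b' := b₁) (by simp [hb.symm])
  let ℓ : S → ℝ := fun s => (Fintype.equivFin S s : ℕ)
  have hℓ : Injective ℓ :=
    (Nat.cast_injective.comp Fin.val_injective).comp (Fintype.equivFin S).injective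
  -- `z` separates the centred rows; adding `y` itself contributes `½ Σ μ ‖y s - y a‖²`, which
  -- absorbs the cross term `κ ⟪y s - y a, z s⟫` pair by pair once `κ` is small.
  let z : S → B → ℝ := fun s => ℓ s • Pi.single b₀ 1
  have hz : Injective (centering B ∘ z) := fun s a h =>
    hℓ (smul_left_injective ℝ he (by simpa [z] using h))
  have hnonneg : ∀ᶠ κ in 𝓝 (0 : ℝ), ∀ s a,
      0 ≤ (y s - y a) ⬝ᵥ (y s - y a) / 2 + κ * ((y s - y a) ⬝ᵥ z s) :=
    eventually_all.2 fun s => eventually_all.2 fun a =>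
      eventually_nonneg_add_mul (div_nonneg (dotProduct_self_nonneg _) zero_le_two) fun h => by
        rw [dotProduct_self_eq_zero.1 (div_eq_zero_iff.1 h |>.resolve_right two_ne_zero),
          zero_dotProduct]
  obtain ⟨κ, -, hκ, hinj⟩ := exists_pos_of_eventually_nhdsGT
    ((hnonneg.filter_mono nhdsWithin_le_nhds).and (eventually_injective_centering_add_smul y hz))
  refine ⟨y + κ • z, fun μ hμ => ?_, hinj⟩
  rw [diagGap_add_right, diagGap_smul_right, diagGap_self hμ.2.2.1 hμ.2.2.2, diagGap, sum_div,
    mul_sum, ← sum_add_distrib]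
  refine sum_nonneg fun s _ => ?_
  rw [sum_div, mul_sum, ← sum_add_distrib]
  refine sum_nonneg fun a _ => ?_
  have := mul_nonneg (hμ.1 (s, a)) (hκ s a)
  linarith

variable [DecidableEq S] {m : S → ℝ}

lemma exists_perturbation_injective_centering [Nontrivial B] {y : S → B → ℝ} {u : S × B → ℝ}
    (h : ∀ μ, IsCopula m μ → Upay u μ y ≤ Upay u (mu0 m) y) {ε : ℝ} (hε : 0 < ε) :
    ∃ u' : S × B → ℝ, ‖u' - u‖ < ε ∧ (∀ μ, IsCopula m μ → Upay u' μ y ≤ Upay u' (mu0 m) y) ∧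
      Injective (centering B ∘ curry u') := by
  obtain ⟨P, hP, hPinj⟩ := exists_diagGap_nonneg_injective_centering m y
  obtain ⟨δ, hδ, hδε, hinj⟩ := exists_pos_of_eventually_nhdsGT
    (((eventually_norm_smul_lt (uncurry P) hε).filter_mono nhdsWithin_le_nhds).and
      (eventually_injective_centering_add_smul (curry u) hPinj))
  refine ⟨u + δ • uncurry P, by rwa [add_sub_cancel_left], fun μ hμ => ?_, hinj⟩
  have hcurry : curry (u + δ • uncurry P) = curry u + δ • P := rfl
  have hu := sub_nonneg.2 (h μ hμ)
  rw [← sub_nonneg, Upay_mu0_sub_Upay hμ.2.2.1, hcurry, diagGap_add_right, diagGap_smul_right]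
  rw [Upay_mu0_sub_Upay hμ.2.2.1] at hu
  have := hP μ hμ
  positivity

lemma exists_strategy_strict_of_injective_centering [Nonempty B] {y : S → B → ℝ} {u : S × B → ℝ}
    (h : ∀ μ, IsCopula m μ → Upay u μ y ≤ Upay u (mu0 m) y)
    (hinj : Injective (centering B ∘ curry u)) :
    ∃ r, IsStrategy r ∧ ∀ t ∈ Set.Ioc (0 : ℝ) 1, ∀ μ, IsCopula m μ → μ ≠ mu0 m →
      Upay u μ ((1 - t) • y + t • r) < Upay u (mu0 m) ((1 - t) • y + t • r) := by
  obtain ⟨γ, hγ, hr⟩ := exists_isStrategy_alignedStrategy (curry u)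
  refine ⟨alignedStrategy γ (curry u), hr, fun t ⟨ht₀, ht₁⟩ μ hμ hne => ?_⟩
  have hy := sub_nonneg.2 (h μ hμ)
  rw [Upay_mu0_sub_Upay hμ.2.2.1] at hy
  have hpos := diagGap_self_pos hμ hne hinj
  have ht : 0 ≤ 1 - t := sub_nonneg.2 ht₁
  rw [← sub_pos, Upay_mu0_sub_Upay hμ.2.2.1, diagGap_add_left, diagGap_smul_left,
    diagGap_smul_left, diagGap_alignedStrategy]
  positivity

end

section

variable {S B : Type*} [Fintype S] [Fintype B] {m : S → ℝ}

lemma sum_mul_dotProduct_sub_mean (hm1 : ∑ s, m s = 1) (v : S → B → ℝ) :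
    ∑ s, m s * (v s ⬝ᵥ (v s - ∑ a, m a • v a)) =
      ∑ s, m s * ((v s - ∑ a, m a • v a) ⬝ᵥ (v s - ∑ a, m a • v a)) := by
  set p := ∑ a, m a • v a
  have hmean : ∑ s, m s * (p ⬝ᵥ (v s - p)) = 0 := calc
    _ = p ⬝ᵥ ∑ s, m s • (v s - p) := by simp only [dotProduct_sum, dotProduct_smul, smul_eq_mul]
    _ = 0 := by simp only [smul_sub, sum_sub_distrib, ← sum_smul, hm1, one_smul, p, sub_self,
      dotProduct_zero]
  simp only [sub_dotProduct _ p, mul_sub, sum_sub_distrib, hmean, sub_zero]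

lemma exists_payoff_mean_zero_Upay_pos [DecidableEq S] (hm : ∀ s, 0 < m s) (hm1 : ∑ s, m s = 1)
    {y : S → B → ℝ} {s₁ s₂ : S} (hy : y s₁ ≠ y s₂) :
    ∃ ψ : S × B → ℝ, (∀ b, ∑ s, m s * ψ (s, b) = 0) ∧ 0 < Upay ψ (mu0 m) y := by
  set p := ∑ a, m a • y a
  refine ⟨uncurry fun s => y s - p, fun b => ?_, ?_⟩
  · simp only [uncurry_apply_pair, Pi.sub_apply, mul_sub, sum_sub_distrib, ← sum_mul, hm1, one_mul,
      p, Finset.sum_apply, Pi.smul_apply, smul_eq_mul, sub_self]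
  · obtain ⟨s, hs⟩ : ∃ s, y s ≠ p := by
      by_contra! h
      exact hy ((h s₁).trans (h s₂).symm)
    have hterm : ∀ s, 0 ≤ m s * ((y s - p) ⬝ᵥ (y s - p)) :=
      fun s => mul_nonneg (hm s).le (dotProduct_self_nonneg _)
    rw [Upay_mu0, curry_uncurry, sum_mul_dotProduct_sub_mean hm1]
    exact sum_pos' (fun s _ => hterm s)
      ⟨s, mem_univ s, mul_pos (hm s) (dotProduct_self_pos (sub_ne_zero.2 hs))⟩

lemma exists_perturbation_mean_lt_Upay [DecidableEq S] (hm : ∀ s, 0 < m s) (hm1 : ∑ s, m s = 1)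
    {y : S → B → ℝ} {s₁ s₂ : S} (hy : y s₁ ≠ y s₂) {u : S × B → ℝ}
    (h : ∀ b, ∑ s, m s * u (s, b) ≤ Upay u (mu0 m) y) {ε : ℝ} (hε : 0 < ε) :
    ∃ u' : S × B → ℝ, ‖u' - u‖ < ε ∧ ∀ b, ∑ s, m s * u' (s, b) < Upay u' (mu0 m) y := by
  obtain ⟨ψ, hψ, hψpos⟩ := exists_payoff_mean_zero_Upay_pos hm hm1 hy
  obtain ⟨δ, hδ, hδε⟩ :=
    exists_pos_of_eventually_nhdsGT (nhdsWithin_le_nhds (eventually_norm_smul_lt ψ hε))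
  refine ⟨u + δ • ψ, by rwa [add_sub_cancel_left], fun b => ?_⟩
  have hmean : ∑ s, m s * (u + δ • ψ) (s, b) = ∑ s, m s * u (s, b) := by
    simp only [Pi.add_apply, Pi.smul_apply, smul_eq_mul, mul_add, sum_add_distrib,
      mul_left_comm _ δ, ← mul_sum, hψ, mul_zero, add_zero]
  rw [hmean, Upay_add_smul]
  linarith [h b, mul_pos hδ hψpos]

lemma eventually_lt_Upay_mix {ι : Type*} [Finite ι] {c : ι → ℝ} {u : S × B → ℝ} {μ : S × S → ℝ}
    {y : S → B → ℝ} (h : ∀ i, c i < Upay u μ y) (r : S → B → ℝ) :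
    ∀ᶠ t in 𝓝 (0 : ℝ), ∀ i, c i < Upay u μ ((1 - t) • y + t • r) := by
  have hlim : Tendsto (fun t : ℝ => Upay u μ ((1 - t) • y + t • r)) (𝓝 0) (𝓝 (Upay u μ y)) := by
    simp only [Upay_mix]
    exact (by fun_prop : Continuous fun t : ℝ => (1 - t) * Upay u μ y + t * Upay u μ r).tendsto' 0 _
      (by simp)
  exact eventually_all.2 fun i => hlim.eventually_const_lt (h i)

end

/- The condition `U²(μ₀,y) ≥ v²` (resp. `> v²`), where `v² = max_b Σ_s m(s)u²(s,b)`,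
is expressed as the inequality against every action `b`. -/
theorem stmt13_general {S B : Type*} [Fintype S] [DecidableEq S]
    [Fintype B]
    (m : S → ℝ) (hm : ∀ s, 0 < m s) (hm1 : ∑ s, m s = 1)
    (u1 u2 : S × B → ℝ)
    (hcondB : ∃ y : S → B → ℝ, IsStrategy y ∧ (∃ s s' : S, y s ≠ y s') ∧
      (∀ b : B, ∑ s, m s * u2 (s, b) ≤ Upay u2 (mu0 m) y) ∧
      ∀ μ : S × S → ℝ, IsCopula m μ → Upay u1 μ y ≤ Upay u1 (mu0 m) y)
    (ε : ℝ) (hε : 0 < ε) :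
    ∃ (u1' u2' : S × B → ℝ) (y' : S → B → ℝ),
      ‖u1' - u1‖ < ε ∧ ‖u2' - u2‖ < ε ∧ IsStrategy y' ∧
      (∀ b : B, ∑ s, m s * u2' (s, b) < Upay u2' (mu0 m) y') ∧
      ∀ μ : S × S → ℝ, IsCopula m μ → μ ≠ mu0 m →
        Upay u1' μ y' < Upay u1' (mu0 m) y' := by
  obtain ⟨y, hy, ⟨s₁, s₂, hys⟩, hy2, hy1⟩ := hcondB
  have : Nontrivial B := hy.nontrivial hys
  obtain ⟨u1', hu1', hy1', hinj⟩ := exists_perturbation_injective_centering hy1 hε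
  obtain ⟨r, hr, hgap1⟩ := exists_strategy_strict_of_injective_centering hy1' hinj
  obtain ⟨u2', hu2', hgap2⟩ := exists_perturbation_mean_lt_Upay hm hm1 hys hy2 hε
  obtain ⟨t, ht₀, ht₁, hgap2'⟩ := exists_pos_of_eventually_nhdsGT
    (nhdsWithin_le_nhds ((eventually_le_nhds one_pos).and (eventually_lt_Upay_mix hgap2 r)))
  exact ⟨u1', u2', (1 - t) • y + t • r, hu1', hu2', hy.mix hr ht₀.le ht₁, hgap2',
    hgap1 t ⟨ht₀, ht₁⟩⟩

theorem stmt13 {S B : Type*} [Fintype S] [DecidableEq S] (hS : 1 < Fintype.card S)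
    [Fintype B] [Nonempty B]
    (m : S → ℝ) (hm : ∀ s, 0 < m s) (hm1 : ∑ s, m s = 1)
    (u1 u2 : S × B → ℝ)
    (hcondB : ∃ y : S → B → ℝ, IsStrategy y ∧ (∃ s s' : S, y s ≠ y s') ∧
      (∀ b : B, ∑ s, m s * u2 (s, b) ≤ Upay u2 (mu0 m) y) ∧
      ∀ μ : S × S → ℝ, IsCopula m μ → Upay u1 μ y ≤ Upay u1 (mu0 m) y)
    (ε : ℝ) (hε : 0 < ε) :
    ∃ (u1' u2' : S × B → ℝ) (y' : S → B → ℝ),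
      ‖u1' - u1‖ < ε ∧ ‖u2' - u2‖ < ε ∧ IsStrategy y' ∧
      (∀ b : B, ∑ s, m s * u2' (s, b) < Upay u2' (mu0 m) y') ∧
      ∀ μ : S × S → ℝ, IsCopula m μ → μ ≠ mu0 m →
        Upay u1' μ y' < Upay u1' (mu0 m) y' :=
  stmt13_general m hm hm1 u1 u2 hcondB ε hε
end
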